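/- arXiv:1406.2982 — 8 statements merged into one kernel-verified Lean document; each statement's English description precedes it below -/
import Mathlib

section
/- For all sets A, B ⊆ ℕ, if B is 1-reducible to A then B is mod-recursive reducible to A. -/
open Filter

/-- A finite record of oracle query answers: a finite list of (position, bit) pairs. -/
abbrev FinInfo : Type := List (ℕ × Bool)

/-- Two finite query-answer records are compatible if they agree wherever both answer. -/
def FinInfo.Compatible (σ τ : FinInfo) : Prop :=
  ∀ p ∈ σ, ∀ q ∈ τ, p.1 = q.1 → p.2 = q.2

/-- The answers recorded in `σ` are exactly those given by the characteristic
function of the set `C`. -/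
def AgreesSet (σ : FinInfo) (C : Set ℕ) : Prop :=
  ∀ p ∈ σ, (p.2 = true ↔ p.1 ∈ C)

/-- The answers recorded in `σ` are all given by the partial oracle `g`. -/
def AgreesPart (σ : FinInfo) (g : ℕ →. Bool) : Prop :=
  ∀ p ∈ σ, p.2 ∈ g p.1

/-- `g` is a partial oracle for the set `A`: a partial function from `ℕ` to `Bool`
agreeing with the characteristic function of `A` on its domain. -/
def IsPartialOracle (g : ℕ →. Bool) (A : Set ℕ) : Prop :=
  ∀ n b, b ∈ g n → (b = true ↔ n ∈ A)

/-- The domain of a partial oracle. -/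
def pDom (g : ℕ →. Bool) : Set ℕ := {n | (g n).Dom}

/-- A Turing functional (oracle Turing machine program), presented as a computable
enumeration of axioms `(σ, n, b)`, meaning: if the oracle answers the queries
recorded in `σ` as `σ` prescribes, then the machine halts on input `n` with
output `b`.  Oracle queries are made in parallel, so with a partial oracle the
machine halts on `n` iff some axiom for `n` is answered by the partial oracle.
Determinism of the machine is reflected in the requirement that axioms with
compatible query answers give equal outputs. -/
structure TuringFunctional where
  axs : ℕ → Option (FinInfo × ℕ × Bool)
  axs_computable : Computable axs
  consistent : ∀ k₁ k₂ σ₁ σ₂ n b₁ b₂, axs k₁ = some (σ₁, n, b₁) →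
    axs k₂ = some (σ₂, n, b₂) → σ₁.Compatible σ₂ → b₁ = b₂

namespace TuringFunctional

/-- `Φ^C(n)` halts with output `b` (total oracle `C`). -/
def HaltsT (Φ : TuringFunctional) (C : Set ℕ) (n : ℕ) (b : Bool) : Prop :=
  ∃ k σ, Φ.axs k = some (σ, n, b) ∧ AgreesSet σ C

/-- `Φ^g(n)` halts with output `b` (partial oracle `g`). -/
def HaltsP (Φ : TuringFunctional) (g : ℕ →. Bool) (n : ℕ) (b : Bool) : Prop :=
  ∃ k σ, Φ.axs k = some (σ, n, b) ∧ AgreesPart σ g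

/-- `Φ^C` is total. -/
def TotalOn (Φ : TuringFunctional) (C : Set ℕ) : Prop := ∀ n, ∃ b, Φ.HaltsT C n b

/-- The set `{n : Φ^C(n) = B(n)}` on which `Φ^C` halts and agrees with the
characteristic function of `B`. -/
def AgreeSet (Φ : TuringFunctional) (C B : Set ℕ) : Set ℕ :=
  {n | ∃ b, Φ.HaltsT C n b ∧ (b = true ↔ n ∈ B)}

/-- `Φ^A = B`: with oracle `A`, `Φ` is total and computes the characteristic
function of `B`. -/
def FunEq (Φ : TuringFunctional) (A B : Set ℕ) : Prop :=
  Φ.TotalOn A ∧ ∀ n b, Φ.HaltsT A n b → (b = true ↔ n ∈ B)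

/-- `Φ^g ≃ B`: every halting output of `Φ` with partial oracle `g` agrees with
the characteristic function of `B`. -/
def PAgrees (Φ : TuringFunctional) (g : ℕ →. Bool) (B : Set ℕ) : Prop :=
  ∀ n b, Φ.HaltsP g n b → (b = true ↔ n ∈ B)

/-- The domain of `Φ^g`. -/
def PDomain (Φ : TuringFunctional) (g : ℕ →. Bool) : Set ℕ :=
  {n | ∃ b, Φ.HaltsP g n b}

/-- The axiom with index `k` applies to oracle `C` on input `n`. -/
def AppliesAt (Φ : TuringFunctional) (C : Set ℕ) (n k : ℕ) : Prop :=
  ∃ σ b, Φ.axs k = some (σ, n, b) ∧ AgreesSet σ C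

/-- The (halting) computation of `Φ^C(n)` queries the oracle bit `C(m)`:
the first axiom in the enumeration that applies to `C` on input `n`
records an answer to a query at position `m`. -/
def QueriesAt (Φ : TuringFunctional) (C : Set ℕ) (n m : ℕ) : Prop :=
  ∃ k σ b, Φ.axs k = some (σ, n, b) ∧ AgreesSet σ C ∧
    (∀ k' < k, ¬ Φ.AppliesAt C n k') ∧ ∃ p ∈ σ, p.1 = m

end TuringFunctional

/-- `D ⊆ ℕ` has (asymptotic) density 1. -/
def DensityOne (D : Set ℕ) : Prop :=
  Filter.Tendsto (fun n : ℕ => ((D ∩ Set.Iio n).ncard : ℝ) / n) Filter.atTop (nhds 1)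

/-- `B ≤₁ A`: 1-reducibility. -/
def OneRed (B A : Set ℕ) : Prop :=
  ∃ f : ℕ → ℕ, Computable f ∧ Function.Injective f ∧ ∀ n, n ∈ B ↔ f n ∈ A

/-- `B ≤_T A`: Turing reducibility. -/
def TuringRed (B A : Set ℕ) : Prop :=
  ∃ Φ : TuringFunctional, Φ.FunEq A B

/-- `B ≤_mr A`: mod-recursive reducibility. -/
def ModRecRed (B A : Set ℕ) : Prop :=
  ∃ Φ : TuringFunctional, Φ.FunEq A B ∧
    ∀ C : Set ℕ, ComputablePred (fun n => (n ∈ C ↔ n ∈ A)) →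
      Φ.TotalOn C ∧ ComputablePred (fun n => n ∈ Φ.AgreeSet C B)

/-- `B ≤_mf A`: mod-finite reducibility. -/
def ModFinRed (B A : Set ℕ) : Prop :=
  ∃ Φ : TuringFunctional, Φ.FunEq A B ∧
    ∀ C : Set ℕ, {n | ¬ (n ∈ C ↔ n ∈ A)}.Finite →
      Φ.TotalOn C ∧ (Φ.AgreeSet C B)ᶜ.Finite

/-- `B ≤_cor A`: coarse reducibility. -/
def CoarseRed (B A : Set ℕ) : Prop :=
  ∃ Φ : TuringFunctional,
    ∀ C : Set ℕ, DensityOne {n | n ∈ C ↔ n ∈ A} →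
      Φ.TotalOn C ∧ DensityOne (Φ.AgreeSet C B)

/-- `B ≤_cf A`: cofinite reducibility. -/
def CofinRed (B A : Set ℕ) : Prop :=
  ∃ Φ : TuringFunctional, Φ.FunEq A B ∧
    ∀ g : ℕ →. Bool, IsPartialOracle g A → (pDom g)ᶜ.Finite →
      Φ.PAgrees g B ∧ (Φ.PDomain g)ᶜ.Finite

/-- `B ≤_g A`: generic reducibility. -/
def GenericRed (B A : Set ℕ) : Prop :=
  ∃ Φ : TuringFunctional, Φ.FunEq A B ∧
    ∀ g : ℕ →. Bool, IsPartialOracle g A → DensityOne (pDom g) →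
      Φ.PAgrees g B ∧ DensityOne (Φ.PDomain g)

/-- `B ≤_ii A`: infinite-information reducibility. -/
def IIRed (B A : Set ℕ) : Prop :=
  ∃ Φ : TuringFunctional,
    ∀ g : ℕ →. Bool, IsPartialOracle g A → (pDom g).Infinite →
      Φ.PAgrees g B ∧ (Φ.PDomain g).Infinite

/-- `B ≤_ubfb A`: use-bounded-from-below reducibility. -/
def UbfbRed (B A : Set ℕ) : Prop :=
  ∃ Φ : TuringFunctional, Φ.FunEq A B ∧
    ∀ m : ℕ, ∀ᶠ n in Filter.atTop, ¬ Φ.QueriesAt A n m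

/-- `R(S) = {2^n · m : n ∈ S, m odd}`. -/
def Rmap (S : Set ℕ) : Set ℕ :=
  {x | ∃ n ∈ S, ∃ m : ℕ, Odd m ∧ x = 2 ^ n * m}

/-- `R̃(S) = {2^n + m : n ∈ S, m < 2^n}`. -/
def Rtilde (S : Set ℕ) : Set ℕ :=
  {x | ∃ n ∈ S, ∃ m : ℕ, m < 2 ^ n ∧ x = 2 ^ n + m}

/-- The Turing join `A ⊕ B`. -/
def turingJoin (A B : Set ℕ) : Set ℕ :=
  {x | (∃ n ∈ A, x = 2 * n) ∨ (∃ n ∈ B, x = 2 * n + 1)}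

theorem one_red_implies_mod_recursive_red (A B : Set ℕ) (h : OneRed B A) :
    ModRecRed B A := by
  classical
  obtain ⟨f, hfc, hfi, hfB⟩ := h
  set ax : ℕ → Option (FinInfo × ℕ × Bool) :=
    fun k => some ([(f k.div2, k.bodd)], k.div2, k.bodd) with hax
  have hcomp : Computable ax := by
    apply Computable.option_some.comp
    exact Computable.pair
      (Computable.list_cons.comp
        (Computable.pair (hfc.comp Primrec.nat_div2.to_comp) Primrec.nat_bodd.to_comp)
        (Computable.const []))
      (Computable.pair Primrec.nat_div2.to_comp Primrec.nat_bodd.to_comp)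
  have hcons : ∀ k₁ k₂ σ₁ σ₂ n b₁ b₂, ax k₁ = some (σ₁, n, b₁) →
      ax k₂ = some (σ₂, n, b₂) → σ₁.Compatible σ₂ → b₁ = b₂ := by
    intro k₁ k₂ σ₁ σ₂ n b₁ b₂ h1 h2 hcompat
    simp only [hax, Option.some.injEq, Prod.mk.injEq] at h1 h2
    obtain ⟨hσ1, hn1, hb1⟩ := h1
    obtain ⟨hσ2, hn2, hb2⟩ := h2
    exact hcompat (f n, b₁) (by rw [← hσ1, ← hn1, hb1]; exact List.mem_singleton_self _)
      (f n, b₂) (by rw [← hσ2, ← hn2, hb2]; exact List.mem_singleton_self _) rfl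
  set Φ : TuringFunctional := ⟨ax, hcomp, hcons⟩ with hΦ
  have haltsT_iff : ∀ (C : Set ℕ) (n : ℕ) (b : Bool),
      Φ.HaltsT C n b ↔ (b = true ↔ f n ∈ C) := by
    intro C n b
    constructor
    · rintro ⟨k, σ, hk, hag⟩
      simp only [hΦ, hax, Option.some.injEq, Prod.mk.injEq] at hk
      obtain ⟨hσ, hn, hb⟩ := hk
      exact hag (f n, b) (by rw [← hσ, ← hn, hb]; exact List.mem_singleton_self _)
    · intro hb
      refine ⟨2 * n + (if b then 1 else 0), [(f n, b)], ?_, ?_⟩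
      · simp only [hΦ, hax, Option.some.injEq, Prod.mk.injEq]
        have e1 : (2*n + (if b then 1 else 0)).div2 = n := by
          rw [Nat.div2_val]; cases b <;> simp <;> omega
        have e2 : (2*n + (if b then 1 else 0)).bodd = b := by
          cases b <;> simp [Nat.bodd_add, Nat.bodd_mul]
        rw [e1, e2]; exact ⟨rfl, rfl, rfl⟩
      · intro p hp
        simp only [List.mem_singleton] at hp
        subst hp
        exact hb
  have htotal : ∀ C : Set ℕ, Φ.TotalOn C := by
    intro C n
    exact ⟨decide (f n ∈ C), (haltsT_iff C n _).2 (by simp)⟩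
  have hmem : ∀ (C : Set ℕ) (n : ℕ), n ∈ Φ.AgreeSet C B ↔ (f n ∈ C ↔ n ∈ B) := by
    intro C n
    constructor
    · rintro ⟨b, hb, hb'⟩
      exact ((haltsT_iff C n b).1 hb).symm.trans hb'
    · intro hiff
      exact ⟨decide (f n ∈ C), (haltsT_iff C n _).2 (by simp),
        (by simpa using hiff)⟩
  refine ⟨Φ, ⟨htotal A, ?_⟩, ?_⟩
  · intro n b hb
    exact ((haltsT_iff A n b).1 hb).trans (hfB n).symm
  · intro C hC
    refine ⟨htotal C, ?_⟩
    obtain ⟨g, hg, hgeq⟩ := ComputablePred.computable_iff.1 hC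
    refine ComputablePred.computable_iff.2 ⟨fun n => g (f n), hg.comp hfc, ?_⟩
    funext n
    apply propext
    rw [hmem C n]
    have h1 : (f n ∈ C ↔ f n ∈ A) = (g (f n) = true) := congrFun hgeq (f n)
    constructor
    · intro hcb
      rw [← h1]
      exact hcb.trans (hfB n)
    · intro hcb
      rw [← h1] at hcb
      exact hcb.trans (hfB n).symm
end

section
/- For all sets A, B ⊆ ℕ, if B is use-bounded-from-below reducible to A then B is cofinitely reducible to A. -/
open Filter

theorem ubfb_red_implies_cofinite_red (A B : Set ℕ) (h : UbfbRed B A) :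
    CofinRed B A := by
  classical
  obtain ⟨Φ, hfe, hub⟩ := h
  refine ⟨Φ, hfe, ?_⟩
  intro g hg hcof
  constructor
  · -- PAgrees
    rintro n b ⟨k, σ, hk, hagr⟩
    exact hfe.2 n b ⟨k, σ, hk, fun p hp => hg p.1 p.2 (hagr p hp)⟩
  · -- cofinite domain
    have hF : ∀ᶠ n in Filter.atTop, ∀ m ∈ (pDom g)ᶜ, ¬ Φ.QueriesAt A n m := by
      rw [Filter.eventually_all_finite hcof]
      exact fun m _ => hub m
    have hdom : ∀ᶠ n in Filter.atTop, n ∈ Φ.PDomain g := by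
      filter_upwards [hF] with n hn
      obtain ⟨b, k0, σ0, hk0, hA0⟩ := hfe.1 n
      have hex : ∃ k, Φ.AppliesAt A n k := ⟨k0, σ0, b, hk0, hA0⟩
      set k := Nat.find hex with hkdef
      obtain ⟨σ, b', hk, hA⟩ := Nat.find_spec hex
      have hmin : ∀ k' < k, ¬ Φ.AppliesAt A n k' := fun k' hk' =>
        Nat.find_min hex hk'
      have hagr : AgreesPart σ g := by
        intro p hp
        have hpd : p.1 ∈ pDom g := by
          by_contra hpn
          exact hn p.1 hpn ⟨k, σ, b', hk, hA, hmin, p, hp, rfl⟩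
        have hmem : (g p.1).get hpd ∈ g p.1 := Part.get_mem hpd
        have h1 : ((g p.1).get hpd = true) ↔ p.1 ∈ A := hg p.1 _ hmem
        have h2 : (p.2 = true) ↔ p.1 ∈ A := hA p hp
        have : p.2 = (g p.1).get hpd := by
          rcases hb2 : p.2 <;> rcases hb1 : (g p.1).get hpd <;> simp_all
        rw [this]; exact hmem
      exact ⟨b', k, σ, hk, hagr⟩
    rw [← Nat.cofinite_eq_atTop] at hdom
    exact hdom
end

section
/- For all sets A, B ⊆ ℕ, if B is 1-reducible to A then A is infinite-information reducible to B. -/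
open Filter

theorem one_red_implies_reverse_ii_red (A B : Set ℕ) (h : OneRed B A) :
    IIRed A B := by
  obtain ⟨f, hfc, hfi, hfB⟩ := h
  refine ⟨⟨fun k => some ([(k.div2, k.bodd)], f k.div2, k.bodd), ?_, ?_⟩, ?_⟩
  · have h1 : Computable fun k : ℕ => ([(k.div2, k.bodd)] : FinInfo) := by
      have : Primrec fun k : ℕ => ([(k.div2, k.bodd)] : FinInfo) :=
        Primrec.list_cons.comp (Primrec.nat_div2.pair Primrec.nat_bodd)
          (Primrec.const [])
      exact this.to_comp
    exact Computable.option_some.comp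
      (h1.pair ((hfc.comp (Primrec.nat_div2.to_comp)).pair Primrec.nat_bodd.to_comp))
  · intro k₁ k₂ σ₁ σ₂ n b₁ b₂ h₁ h₂ hcomp
    simp only [Option.some.injEq, Prod.mk.injEq] at h₁ h₂
    obtain ⟨hσ₁, hn₁, hb₁⟩ := h₁
    obtain ⟨hσ₂, hn₂, hb₂⟩ := h₂
    have hd : k₁.div2 = k₂.div2 := hfi (hn₁.trans hn₂.symm)
    have := hcomp (k₁.div2, k₁.bodd) (by rw [← hσ₁]; simp)
      (k₂.div2, k₂.bodd) (by rw [← hσ₂]; simp) hd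
    simpa [← hb₁, ← hb₂] using this
  · intro g hg hinf
    constructor
    · rintro n b ⟨k, σ, hk, hagr⟩
      simp only [Option.some.injEq, Prod.mk.injEq] at hk
      obtain ⟨hσ, hn, hb⟩ := hk
      have hmem : k.bodd ∈ g k.div2 := by
        have := hagr (k.div2, k.bodd) (by rw [← hσ]; simp)
        exact this
      have : k.bodd = true ↔ k.div2 ∈ B := hg _ _ hmem
      rw [← hb, ← hn, this, hfB]
    · refine (hinf.image (Set.injOn_of_injective hfi)).mono ?_
      rintro x ⟨n, hn, rfl⟩
      have hd : (g n).Dom := hn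
      set b := (g n).get hd with hbdef
      have hb : b ∈ g n := Part.get_mem hd
      refine ⟨b, Nat.bit b n, [(n, b)], ?_, ?_⟩
      · simp [Nat.div2_bit, Nat.bodd_bit]
      · rintro p hp
        simp only [List.mem_singleton] at hp
        subst hp
        exact hb
end

section
/- For all sets A, B ⊆ ℕ: B is Turing reducible to A if and only if R(B) is cofinitely reducible to R(A). Hence the map S ↦ R(S) induces an embedding of the Turing degrees into the cofinite degrees. -/
open Filter

/-!
If `Ψ^A = B`, then `R(B)` is computed from `R(A)` robustly: on input `x ≠ 0`, run `Ψ` on the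
2-adic valuation `v₂ x` and ask each query `j` of `Ψ` at all copies `2 ^ j * (2 * m + 1)` with
`m ≤ 2 * x` outside a guessed list `L` of at most `x` exceptions. Any two such sets of copies
meet, so the answers are consistent; and when only finitely many oracle bits
`2 ^ j * (2 * m + 1)` are missing, every `x` exceeding the number of their indices `m` may put
all of these into `L`, so the computation halts on all but finitely many inputs. Conversely
`B(n) = R(B)(2 ^ n)`, and a query `x ≠ 0` to `R(A)` is answered by `A(v₂ x)`, while `0 ∉ R(A)`.
-/

theorem AgreesPart.agreesSet {σ : FinInfo} {g : ℕ →. Bool} {C : Set ℕ} (h : AgreesPart σ g)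
    (hg : IsPartialOracle g C) : AgreesSet σ C :=
  fun p hp => hg p.1 p.2 (h p hp)

namespace TuringFunctional

variable {Φ : TuringFunctional} {g : ℕ →. Bool} {C B : Set ℕ}

theorem HaltsP.haltsT {n : ℕ} {b : Bool} (h : Φ.HaltsP g n b) (hg : IsPartialOracle g C) :
    Φ.HaltsT C n b :=
  let ⟨k, σ, hk, hσ⟩ := h
  ⟨k, σ, hk, hσ.agreesSet hg⟩

theorem FunEq.pAgrees (h : Φ.FunEq C B) (hg : IsPartialOracle g C) : Φ.PAgrees g B :=
  fun n b hb => h.2 n b (hb.haltsT hg)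

end TuringFunctional

theorem padicValNat_two_pow_mul_odd (n m : ℕ) : padicValNat 2 (2 ^ n * (2 * m + 1)) = n := by
  rw [padicValNat.mul (by positivity) (by omega), padicValNat.prime_pow,
    padicValNat.eq_zero_of_not_dvd (by omega), add_zero]

theorem mem_Rmap_iff {S : Set ℕ} {x : ℕ} : x ∈ Rmap S ↔ x ≠ 0 ∧ padicValNat 2 x ∈ S := by
  constructor
  · rintro ⟨n, hn, m, ⟨m, rfl⟩, rfl⟩
    rw [two_mul, ← two_mul, padicValNat_two_pow_mul_odd]
    exact ⟨by positivity, hn⟩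
  · rintro ⟨hx, hS⟩
    obtain ⟨n, m, hm, rfl⟩ := Nat.exists_eq_two_pow_mul_odd hx
    obtain ⟨m, rfl⟩ := hm
    rw [two_mul m, ← two_mul, padicValNat_two_pow_mul_odd] at hS
    exact ⟨n, hS, _, odd_two_mul_add_one m, rfl⟩

theorem zero_notMem_Rmap (S : Set ℕ) : 0 ∉ Rmap S := fun h => (mem_Rmap_iff.mp h).1 rfl

theorem two_pow_mul_odd_mem_Rmap {S : Set ℕ} {n m : ℕ} :
    2 ^ n * (2 * m + 1) ∈ Rmap S ↔ n ∈ S := by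
  rw [mem_Rmap_iff, padicValNat_two_pow_mul_odd]
  exact and_iff_right (by positivity)

theorem two_pow_mem_Rmap {S : Set ℕ} {n : ℕ} : 2 ^ n ∈ Rmap S ↔ n ∈ S := by
  simpa using two_pow_mul_odd_mem_Rmap (S := S) (n := n) (m := 0)

theorem findGreatest_pow_dvd_eq_padicValNat {p : ℕ} (hp : p ≠ 1) (x : ℕ) :
    Nat.findGreatest (fun n => p ^ n ∣ x) x = padicValNat p x := by
  rcases eq_or_ne x 0 with rfl | hx
  · simp
  refine Nat.findGreatest_eq_iff.mpr ⟨?_, fun _ => pow_padicValNat_dvd, fun k hk _ hdvd => ?_⟩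
  · exact Nat.padicValNat_le_self x
  · exact (padicValNat_dvd_iff_le_of_ne_one hp hx).mp hdvd |>.not_gt hk

theorem primrec₂_nat_pow : Primrec₂ ((· ^ ·) : ℕ → ℕ → ℕ) :=
  Primrec₂.unpaired'.1 Nat.Primrec.pow

theorem primrec_padicValNat {p : ℕ} (hp : p ≠ 1) : Primrec (padicValNat p) := by
  have hdvd : PrimrecRel fun x n : ℕ => p ^ n ∣ x :=
    (Primrec.eq.comp (Primrec.nat_mod.comp Primrec.fst
      (primrec₂_nat_pow.comp (Primrec.const p) Primrec.snd)) (Primrec.const 0)).of_eq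
      fun _ => Nat.dvd_iff_mod_eq_zero.symm
  exact (Primrec.nat_findGreatest Primrec.id hdvd).of_eq (findGreatest_pow_dvd_eq_padicValNat hp)

def copyIndices (x : ℕ) (L : List ℕ) : List ℕ :=
  (List.range (2 * x + 1)).filter (· ∉ L)

theorem mem_copyIndices {x m : ℕ} {L : List ℕ} :
    m ∈ copyIndices x L ↔ m < 2 * x + 1 ∧ m ∉ L := by
  simp [copyIndices]

theorem exists_mem_copyIndices_inter {x : ℕ} {L₁ L₂ : List ℕ} (h₁ : L₁.length ≤ x)
    (h₂ : L₂.length ≤ x) : ∃ m, m ∈ copyIndices x L₁ ∧ m ∈ copyIndices x L₂ := by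
  have hcard : (L₁ ++ L₂).toFinset.card < (Finset.range (2 * x + 1)).card := by
    grw [List.toFinset_card_le, List.length_append, Finset.card_range]
    omega
  obtain ⟨m, hm, hmL⟩ := Finset.exists_mem_notMem_of_card_lt_card hcard
  simp only [Finset.mem_range, List.mem_toFinset, List.mem_append, not_or] at hm hmL
  exact ⟨m, mem_copyIndices.mpr ⟨hm, hmL.1⟩, mem_copyIndices.mpr ⟨hm, hmL.2⟩⟩

def spreadQueries (M : List ℕ) (σ : FinInfo) : FinInfo :=
  σ.flatMap fun p => M.map fun m => (2 ^ p.1 * (2 * m + 1), p.2)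

section spreadQueries

variable {M : List ℕ} {σ : FinInfo} {A : Set ℕ}

theorem mem_spreadQueries {q : ℕ × Bool} :
    q ∈ spreadQueries M σ ↔ ∃ p ∈ σ, ∃ m ∈ M, q = (2 ^ p.1 * (2 * m + 1), p.2) := by
  simp [spreadQueries, eq_comm]

theorem agreesSet_spreadQueries (h : AgreesSet σ A) :
    AgreesSet (spreadQueries M σ) (Rmap A) := by
  intro q hq
  obtain ⟨p, hp, m, -, rfl⟩ := mem_spreadQueries.mp hq
  exact (h p hp).trans two_pow_mul_odd_mem_Rmap.symm

theorem AgreesSet.of_spreadQueries {m : ℕ} (hm : m ∈ M)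
    (h : AgreesSet (spreadQueries M σ) (Rmap A)) : AgreesSet σ A := fun p hp =>
  (h _ (mem_spreadQueries.mpr ⟨p, hp, m, hm, rfl⟩)).trans two_pow_mul_odd_mem_Rmap

theorem FinInfo.Compatible.of_spreadQueries {M' : List ℕ} {σ' : FinInfo} {m : ℕ} (hm : m ∈ M)
    (hm' : m ∈ M') (h : (spreadQueries M σ).Compatible (spreadQueries M' σ')) :
    σ.Compatible σ' := fun p hp p' hp' hpp' =>
  h (2 ^ p.1 * (2 * m + 1), p.2) (mem_spreadQueries.mpr ⟨p, hp, m, hm, rfl⟩)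
    (2 ^ p'.1 * (2 * m + 1), p'.2) (mem_spreadQueries.mpr ⟨p', hp', m, hm', rfl⟩)
    (by simp [hpp'])

theorem agreesPart_spreadQueries {g : ℕ →. Bool} (hg : IsPartialOracle g (Rmap A))
    (hσ : AgreesSet σ A) (hdom : ∀ p ∈ σ, ∀ m ∈ M, 2 ^ p.1 * (2 * m + 1) ∈ pDom g) :
    AgreesPart (spreadQueries M σ) g := by
  intro q hq
  obtain ⟨p, hp, m, hm, rfl⟩ := mem_spreadQueries.mp hq
  have hget := Part.get_mem (hdom p hp m hm)
  convert hget using 1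
  exact Bool.eq_iff_iff.mpr
    ((hσ p hp).trans (two_pow_mul_odd_mem_Rmap.symm.trans (hg _ _ hget).symm))

end spreadQueries

def oddIndex (d : ℕ) : ℕ := d / 2 ^ padicValNat 2 d / 2

theorem oddIndex_two_pow_mul_odd (n m : ℕ) : oddIndex (2 ^ n * (2 * m + 1)) = m := by
  rw [oddIndex, padicValNat_two_pow_mul_odd, Nat.mul_div_cancel_left _ (by positivity)]
  omega

theorem primrec₂_copyIndices : Primrec₂ copyIndices := by
  have hR : PrimrecRel fun (m : ℕ) (L : List ℕ) => m ∉ L :=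
    ((PrimrecRel.exists_mem_list Primrec.eq).swap.not).of_eq fun _ _ => by simp
  exact (PrimrecRel.listFilter hR).comp
    (Primrec.list_range.comp (Primrec.succ.comp (Primrec.nat_double.comp Primrec.fst)))
    Primrec.snd

theorem primrec₂_spreadQueries : Primrec₂ spreadQueries := by
  refine Primrec.list_flatMap Primrec.snd (Primrec.list_map (Primrec.fst.comp Primrec.fst) ?_)
  exact (Primrec.pair (Primrec.nat_mul.comp
      (primrec₂_nat_pow.comp (Primrec.const 2) (Primrec.fst.comp (Primrec.snd.comp Primrec.fst)))
      (Primrec.succ.comp (Primrec.nat_double.comp Primrec.snd)))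
    (Primrec.snd.comp (Primrec.snd.comp Primrec.fst))).to₂

def spreadAxiom (x : ℕ) (L : List ℕ) (a : Option (FinInfo × ℕ × Bool)) :
    Option (FinInfo × ℕ × Bool) :=
  if x = 0 then some ([], 0, false) else
    a.bind fun a => if a.2.1 = padicValNat 2 x ∧ L.length ≤ x then
      some (spreadQueries (copyIndices x L) a.1, x, a.2.2) else none

theorem primrec_spreadAxiom :
    Primrec fun w : ℕ × List ℕ × Option (FinInfo × ℕ × Bool) => spreadAxiom w.1 w.2.1 w.2.2 := by
  have hbody : Primrec₂ fun (w : ℕ × List ℕ × Option (FinInfo × ℕ × Bool))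
      (a : FinInfo × ℕ × Bool) => if a.2.1 = padicValNat 2 w.1 ∧ w.2.1.length ≤ w.1 then
        some (spreadQueries (copyIndices w.1 w.2.1) a.1, w.1, a.2.2) else none := by
    refine Primrec.ite (PrimrecPred.and ?_ ?_) ?_ (Primrec.const none)
    · exact Primrec.eq.comp (Primrec.fst.comp (Primrec.snd.comp Primrec.snd))
        ((primrec_padicValNat (by norm_num)).comp (Primrec.fst.comp Primrec.fst))
    · exact Primrec.nat_le.comp (Primrec.list_length.comp (Primrec.fst.comp
        (Primrec.snd.comp Primrec.fst))) (Primrec.fst.comp Primrec.fst)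
    · exact Primrec.option_some.comp (Primrec.pair
        (primrec₂_spreadQueries.comp (primrec₂_copyIndices.comp (Primrec.fst.comp Primrec.fst)
          (Primrec.fst.comp (Primrec.snd.comp Primrec.fst))) (Primrec.fst.comp Primrec.snd))
        (Primrec.pair (Primrec.fst.comp Primrec.fst)
          (Primrec.snd.comp (Primrec.snd.comp Primrec.snd))))
  exact Primrec.ite (Primrec.eq.comp Primrec.fst (Primrec.const 0)) (Primrec.const _)
    (Primrec.option_bind (Primrec.snd.comp Primrec.snd) hbody)

section spreadAxiom

variable {x : ℕ} {L : List ℕ} {a : Option (FinInfo × ℕ × Bool)} {σ τ : FinInfo} {y : ℕ} {b : Bool}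

theorem spreadAxiom_zero : spreadAxiom 0 L a = some ([], 0, false) := if_pos rfl

theorem spreadAxiom_of_ne_zero (hx : x ≠ 0) (hL : L.length ≤ x)
    (ha : a = some (σ, padicValNat 2 x, b)) :
    spreadAxiom x L a = some (spreadQueries (copyIndices x L) σ, x, b) := by
  simp [spreadAxiom, hx, hL, ha]

theorem spreadAxiom_eq_some (h : spreadAxiom x L a = some (τ, y, b)) :
    (y = 0 ∧ b = false) ∨ (y ≠ 0 ∧ L.length ≤ y ∧
      ∃ σ, a = some (σ, padicValNat 2 y, b) ∧ τ = spreadQueries (copyIndices y L) σ) := by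
  unfold spreadAxiom at h
  split_ifs at h with hx
  · simp_all
  · obtain ⟨⟨σ, n, c⟩, rfl, hf⟩ := Option.bind_eq_some_iff.mp h
    split_ifs at hf with hc
    simp only [Option.some.injEq, Prod.mk.injEq] at hf
    obtain ⟨rfl, rfl, rfl⟩ := hf
    obtain ⟨rfl : n = _, hL⟩ := hc
    exact .inr ⟨hx, hL, σ, rfl, rfl⟩

end spreadAxiom

namespace TuringFunctional

variable {Ψ : TuringFunctional} {A B : Set ℕ}

theorem consistent_spreadAxiom {x₁ x₂ k₁ k₂ y : ℕ} {L₁ L₂ : List ℕ}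
    {τ₁ τ₂ : FinInfo} {b₁ b₂ : Bool} (h₁ : spreadAxiom x₁ L₁ (Ψ.axs k₁) = some (τ₁, y, b₁))
    (h₂ : spreadAxiom x₂ L₂ (Ψ.axs k₂) = some (τ₂, y, b₂)) (hτ : τ₁.Compatible τ₂) : b₁ = b₂ := by
  rcases spreadAxiom_eq_some h₁ with ⟨hy, rfl⟩ | ⟨hy, hL₁, σ₁, hk₁, rfl⟩ <;>
    rcases spreadAxiom_eq_some h₂ with ⟨hy', rfl⟩ | ⟨hy', hL₂, σ₂, hk₂, rfl⟩
  · rfl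
  · exact absurd hy hy'
  · exact absurd hy' hy
  · obtain ⟨m, hm₁, hm₂⟩ := exists_mem_copyIndices_inter hL₁ hL₂
    exact Ψ.consistent k₁ k₂ σ₁ σ₂ _ b₁ b₂ hk₁ hk₂ (hτ.of_spreadQueries hm₁ hm₂)

def toRmap (Ψ : TuringFunctional) : TuringFunctional where
  axs := (fun i : ℕ × List ℕ × ℕ => spreadAxiom i.1 i.2.1 (Ψ.axs i.2.2)) ∘
    Denumerable.ofNat (ℕ × List ℕ × ℕ)
  axs_computable := by
    have hargs : Computable fun i : ℕ × List ℕ × ℕ => (i.1, i.2.1, Ψ.axs i.2.2) :=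
      Computable.fst.pair ((Computable.fst.comp Computable.snd).pair
        (Ψ.axs_computable.comp (Computable.snd.comp Computable.snd)))
    have hspread := primrec_spreadAxiom.to_comp.comp hargs
    exact hspread.comp (Primrec.ofNat _).to_comp
  consistent _ _ _ _ _ _ _ h₁ h₂ := consistent_spreadAxiom h₁ h₂

theorem toRmap_axs_encode (x : ℕ) (L : List ℕ) (k : ℕ) :
    Ψ.toRmap.axs (Encodable.encode (x, L, k)) = spreadAxiom x L (Ψ.axs k) := by
  simp [toRmap]

theorem toRmap_funEq (h : Ψ.FunEq A B) : Ψ.toRmap.FunEq (Rmap A) (Rmap B) := by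
  refine ⟨fun x => ?_, fun x b ⟨t, τ, ht, hτ⟩ => ?_⟩
  · rcases eq_or_ne x 0 with rfl | hx
    · refine ⟨false, Encodable.encode (0, ([] : List ℕ), 0), [], ?_, by simp [AgreesSet]⟩
      rw [toRmap_axs_encode, spreadAxiom_zero]
    · obtain ⟨b, k, σ, hk, hσ⟩ := h.1 (padicValNat 2 x)
      refine ⟨b, Encodable.encode (x, ([] : List ℕ), k), spreadQueries (copyIndices x []) σ, ?_,
        agreesSet_spreadQueries hσ⟩
      rw [toRmap_axs_encode,
        spreadAxiom_of_ne_zero hx (List.length_nil.trans_le (Nat.zero_le x)) hk]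
  · rcases spreadAxiom_eq_some ht with ⟨rfl, rfl⟩ | ⟨hx, hL, σ, hk, rfl⟩
    · simpa using zero_notMem_Rmap B
    · obtain ⟨m, hm, -⟩ := exists_mem_copyIndices_inter hL hL
      rw [h.2 _ b ⟨_, σ, hk, hτ.of_spreadQueries hm⟩, mem_Rmap_iff]
      exact (and_iff_right hx).symm

theorem compl_pDomain_toRmap_finite {g : ℕ →. Bool} (hA : Ψ.TotalOn A)
    (hg : IsPartialOracle g (Rmap A)) (hfin : (pDom g)ᶜ.Finite) :
    (Ψ.toRmap.PDomain g)ᶜ.Finite := by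
  set L := hfin.toFinset.toList.map oddIndex
  have hL : ∀ j m, 2 ^ j * (2 * m + 1) ∉ pDom g → m ∈ L := fun j m hjm =>
    List.mem_map.mpr ⟨_, by simpa using hjm, oddIndex_two_pow_mul_odd j m⟩
  refine (Set.finite_Iic L.length).subset fun x hx => ?_
  by_contra hlong
  replace hlong : L.length < x := not_le.mp hlong
  obtain ⟨b, k, σ, hk, hσ⟩ := hA (padicValNat 2 x)
  refine hx ⟨b, Encodable.encode (x, L, k), spreadQueries (copyIndices x L) σ, ?_,
    agreesPart_spreadQueries hg hσ ?_⟩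
  · rw [toRmap_axs_encode, spreadAxiom_of_ne_zero (by omega) hlong.le hk]
  · intro p _ m hm
    by_contra hnot
    exact (mem_copyIndices.mp hm).2 (hL p.1 m hnot)

end TuringFunctional

def contractQueries (σ : FinInfo) : FinInfo :=
  σ.filterMap fun p => if p.1 = 0 then none else some (padicValNat 2 p.1, p.2)

section contractQueries

variable {σ : FinInfo} {A : Set ℕ}

theorem mem_contractQueries {q : ℕ × Bool} :
    q ∈ contractQueries σ ↔ ∃ p ∈ σ, p.1 ≠ 0 ∧ (padicValNat 2 p.1, p.2) = q := by
  simp [contractQueries]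

theorem agreesSet_Rmap_iff : AgreesSet σ (Rmap A) ↔
    (∀ p ∈ σ, p.1 = 0 → p.2 = false) ∧ AgreesSet (contractQueries σ) A := by
  refine ⟨fun h => ⟨fun p hp hp0 => ?_, fun q hq => ?_⟩, fun ⟨h₀, h⟩ p hp => ?_⟩
  · simpa [hp0, zero_notMem_Rmap] using h p hp
  · obtain ⟨p, hp, hp0, rfl⟩ := mem_contractQueries.mp hq
    exact (h p hp).trans (mem_Rmap_iff.trans (and_iff_right hp0))
  · rcases eq_or_ne p.1 0 with hp0 | hp0
    · simp [h₀ p hp hp0, hp0, zero_notMem_Rmap]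
    · exact (h _ (mem_contractQueries.mpr ⟨p, hp, hp0, rfl⟩)).trans
        (mem_Rmap_iff.trans (and_iff_right hp0)).symm

theorem FinInfo.Compatible.of_contractQueries {σ' : FinInfo}
    (h₀ : ∀ p ∈ σ, p.1 = 0 → p.2 = false) (h₀' : ∀ p ∈ σ', p.1 = 0 → p.2 = false)
    (h : (contractQueries σ).Compatible (contractQueries σ')) : σ.Compatible σ' := by
  intro p hp p' hp' hpp'
  rcases eq_or_ne p.1 0 with hp0 | hp0
  · rw [h₀ p hp hp0, h₀' p' hp' (hpp' ▸ hp0)]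
  · exact h (padicValNat 2 p.1, p.2) (mem_contractQueries.mpr ⟨p, hp, hp0, rfl⟩)
      (padicValNat 2 p'.1, p'.2) (mem_contractQueries.mpr ⟨p', hp', hpp' ▸ hp0, rfl⟩)
      (by simp [hpp'])

end contractQueries

def contractAxiom (a : FinInfo × ℕ × Bool) : Option (FinInfo × ℕ × Bool) :=
  if 2 ^ padicValNat 2 a.2.1 = a.2.1 ∧ ∀ p ∈ a.1, p.1 = 0 → p.2 = false then
    some (contractQueries a.1, padicValNat 2 a.2.1, a.2.2) else none

theorem contractAxiom_eq_some {σ τ : FinInfo} {x n : ℕ} {b c : Bool} :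
    contractAxiom (σ, x, b) = some (τ, n, c) ↔
      x = 2 ^ n ∧ (∀ p ∈ σ, p.1 = 0 → p.2 = false) ∧ τ = contractQueries σ ∧ c = b := by
  unfold contractAxiom
  constructor
  · intro h
    split_ifs at h with hc
    simp only [Option.some.injEq, Prod.mk.injEq] at h
    obtain ⟨rfl, rfl, rfl⟩ := h
    exact ⟨hc.1.symm, hc.2, rfl, rfl⟩
  · rintro ⟨rfl, h₀, rfl, rfl⟩
    rw [if_pos ⟨by rw [padicValNat.prime_pow], h₀⟩, padicValNat.prime_pow]

theorem primrec_contractAxiom : Primrec contractAxiom := by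
  have hv : Primrec (padicValNat 2) := primrec_padicValNat (by norm_num)
  have hzero : PrimrecPred fun p : ℕ × Bool => p.1 = 0 → p.2 = false :=
    (PrimrecPred.or (PrimrecPred.not (Primrec.eq.comp Primrec.fst (Primrec.const 0)))
      (Primrec.eq.comp Primrec.snd (Primrec.const false))).of_eq fun _ => imp_iff_not_or.symm
  have hquery : Primrec₂ fun (_ : FinInfo × ℕ × Bool) (p : ℕ × Bool) =>
      if p.1 = 0 then none else some (padicValNat 2 p.1, p.2) :=
    (Primrec.ite (Primrec.eq.comp (Primrec.fst.comp Primrec.snd) (Primrec.const 0))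
      (Primrec.const none) (Primrec.option_some.comp (Primrec.pair
        (hv.comp (Primrec.fst.comp Primrec.snd)) (Primrec.snd.comp Primrec.snd)))).to₂
  refine Primrec.ite (PrimrecPred.and ?_ ?_) ?_ (Primrec.const none)
  · exact Primrec.eq.comp (primrec₂_nat_pow.comp (Primrec.const 2)
      (hv.comp (Primrec.fst.comp Primrec.snd))) (Primrec.fst.comp Primrec.snd)
  · exact (PrimrecPred.forall_mem_list hzero).comp Primrec.fst
  · exact Primrec.option_some.comp (Primrec.pair (Primrec.listFilterMap Primrec.fst hquery)
      (Primrec.pair (hv.comp (Primrec.fst.comp Primrec.snd)) (Primrec.snd.comp Primrec.snd)))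

namespace TuringFunctional

variable {Φ : TuringFunctional} {A B : Set ℕ}

def ofRmap (Φ : TuringFunctional) : TuringFunctional where
  axs k := (Φ.axs k).bind contractAxiom
  axs_computable := Computable.option_bind Φ.axs_computable (primrec_contractAxiom.to_comp.comp
    Computable.snd).to₂
  consistent k₁ k₂ τ₁ τ₂ n b₁ b₂ h₁ h₂ hτ := by
    obtain ⟨⟨σ₁, x₁, c₁⟩, hk₁, h₁⟩ := Option.bind_eq_some_iff.mp h₁
    obtain ⟨⟨σ₂, x₂, c₂⟩, hk₂, h₂⟩ := Option.bind_eq_some_iff.mp h₂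
    obtain ⟨rfl, h₀₁, rfl, rfl⟩ := contractAxiom_eq_some.mp h₁
    obtain ⟨rfl, h₀₂, rfl, rfl⟩ := contractAxiom_eq_some.mp h₂
    exact Φ.consistent k₁ k₂ σ₁ σ₂ _ _ _ hk₁ hk₂ (hτ.of_contractQueries h₀₁ h₀₂)

theorem ofRmap_axs_eq_some {k n : ℕ} {τ : FinInfo} {b : Bool} :
    Φ.ofRmap.axs k = some (τ, n, b) ↔ ∃ σ, Φ.axs k = some (σ, 2 ^ n, b) ∧
      (∀ p ∈ σ, p.1 = 0 → p.2 = false) ∧ τ = contractQueries σ := by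
  simp only [ofRmap, Option.bind_eq_some_iff, Prod.exists, contractAxiom_eq_some]
  constructor
  · rintro ⟨σ, x, c, hk, rfl, h₀, rfl, rfl⟩
    exact ⟨σ, hk, h₀, rfl⟩
  · rintro ⟨σ, hk, h₀, rfl⟩
    exact ⟨σ, _, b, hk, rfl, h₀, rfl, rfl⟩

theorem ofRmap_funEq (h : Φ.FunEq (Rmap A) (Rmap B)) : Φ.ofRmap.FunEq A B := by
  refine ⟨fun n => ?_, fun n b ⟨k, τ, hk, hτ⟩ => ?_⟩
  · obtain ⟨b, k, σ, hk, hσ⟩ := h.1 (2 ^ n)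
    obtain ⟨h₀, hσ'⟩ := agreesSet_Rmap_iff.mp hσ
    exact ⟨b, k, contractQueries σ, ofRmap_axs_eq_some.mpr ⟨σ, hk, h₀, rfl⟩, hσ'⟩
  · obtain ⟨σ, hkσ, h₀, rfl⟩ := ofRmap_axs_eq_some.mp hk
    exact (h.2 _ b ⟨k, σ, hkσ, agreesSet_Rmap_iff.mpr ⟨h₀, hτ⟩⟩).trans two_pow_mem_Rmap

end TuringFunctional

theorem turing_red_iff_cofinite_red_Rmap (A B : Set ℕ) :
    TuringRed B A ↔ CofinRed (Rmap B) (Rmap A) := by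
  constructor
  · rintro ⟨Ψ, hΨ⟩
    refine ⟨Ψ.toRmap, Ψ.toRmap_funEq hΨ, fun g hg hfin => ⟨?_, ?_⟩⟩
    · exact (Ψ.toRmap_funEq hΨ).pAgrees hg
    · exact Ψ.compl_pDomain_toRmap_finite hΨ.1 hg hfin
  · rintro ⟨Φ, hΦ, -⟩
    exact ⟨Φ.ofRmap, Φ.ofRmap_funEq hΦ⟩
end

section
/- There exist sets A, B ⊆ ℕ such that B is 1-reducible to A but B is not coarsely reducible to A. -/
open Filter

/-!
Diagonalize against the countably many Turing functionals run on the empty oracle: on the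
factorial block `[j!, (j+1)!)` with `j = Nat.pair e i`, let `B` disagree with the `e`-th of them.
Each such block makes up almost all of `[0, (j+1)!)`, so no functional computes `B` on a set of
density one. Put `A = {n * n | n ∈ B}`, so that `B ≤₁ A`. As `A` has density zero, the empty
oracle agrees with `A` on a set of density one, and a coarse reduction `Φ` of `B` to `A` would
make `Φ^∅` agree with `B` on a set of density one.
-/

open Set Filter Topology

lemma ncard_inter_Iio_le (D : Set ℕ) (n : ℕ) : (D ∩ Iio n).ncard ≤ n := by
  simpa using ncard_le_ncard (s := D ∩ Iio n) inter_subset_right (finite_Iio n)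

lemma DensityOne.mono {D D' : Set ℕ} (hD : DensityOne D) (hsub : D ⊆ D') : DensityOne D' := by
  refine tendsto_of_tendsto_of_tendsto_of_le_of_le hD tendsto_const_nhds (fun n => ?_) fun n => ?_
  · have := ncard_le_ncard (inter_subset_inter_left (Iio n) hsub) ((finite_Iio n).inter_of_right D')
    dsimp only
    gcongr
  · exact div_le_one_of_le₀ (Nat.cast_le.2 (ncard_inter_Iio_le D' n)) n.cast_nonneg

lemma densityOne_compl_of_tendsto_zero {S : Set ℕ}
    (hS : Tendsto (fun n : ℕ => ((S ∩ Iio n).ncard : ℝ) / n) atTop (𝓝 0)) : DensityOne Sᶜ := by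
  have hsplit (n : ℕ) : ((Sᶜ ∩ Iio n).ncard : ℝ) = n - (S ∩ Iio n).ncard := by
    have h := ncard_inter_add_ncard_sdiff_eq_ncard (Iio n) S (finite_Iio n)
    rw [sdiff_eq, inter_comm (Iio n) S, inter_comm (Iio n) Sᶜ, ncard_Iio_nat] at h
    rw [eq_sub_iff_add_eq, add_comm]
    exact_mod_cast h
  have h := (tendsto_const_nhds (x := (1 : ℝ))).sub hS
  rw [sub_zero] at h
  refine h.congr' ?_
  filter_upwards [eventually_gt_atTop 0] with n hn
  rw [hsplit, sub_div, div_self (by positivity)]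

lemma ncard_range_sq_inter_Iio_le (n : ℕ) :
    ((range fun k : ℕ => k * k) ∩ Iio n).ncard ≤ Nat.sqrt n + 1 := by
  have hsub : (range fun k : ℕ => k * k) ∩ Iio n ⊆ (fun k => k * k) '' Iio (Nat.sqrt n + 1) := by
    rintro _ ⟨⟨k, rfl⟩, hk⟩
    exact ⟨k, Nat.lt_succ_of_le (Nat.le_sqrt.2 (le_of_lt hk)), rfl⟩
  calc _ ≤ ((fun k => k * k) '' Iio (Nat.sqrt n + 1)).ncard :=
        ncard_le_ncard hsub ((finite_Iio _).image _)
    _ ≤ (Iio (Nat.sqrt n + 1)).ncard := ncard_image_le (finite_Iio _)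
    _ = Nat.sqrt n + 1 := ncard_Iio_nat _

lemma densityOne_compl_of_subset_range_sq {A : Set ℕ} (hA : A ⊆ range fun k => k * k) :
    DensityOne Aᶜ := by
  have hbound : Tendsto (fun n : ℕ => (√(n : ℝ))⁻¹ + (n : ℝ)⁻¹) atTop (𝓝 0) := by
    have hinv := tendsto_inv_atTop_zero.comp (tendsto_natCast_atTop_atTop (R := ℝ))
    simpa using (tendsto_inv_atTop_zero.comp (Real.tendsto_sqrt_atTop.comp
      (tendsto_natCast_atTop_atTop (R := ℝ)))).add hinv
  refine densityOne_compl_of_tendsto_zero (tendsto_of_tendsto_of_tendsto_of_le_of_le'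
    tendsto_const_nhds hbound (Eventually.of_forall fun n => by positivity) ?_)
  filter_upwards [eventually_gt_atTop 0] with n hn
  have hcount : ((A ∩ Iio n).ncard : ℝ) ≤ √(n : ℝ) + 1 := by
    have h1 := ncard_le_ncard (inter_subset_inter_left (Iio n) hA) ((finite_Iio n).inter_of_right _)
    have h2 : (Nat.sqrt n : ℝ) ≤ √(n : ℝ) := Real.nat_sqrt_le_real_sqrt
    have h3 : ((A ∩ Iio n).ncard : ℝ) ≤ Nat.sqrt n + 1 :=
      mod_cast h1.trans (ncard_range_sq_inter_Iio_le n)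
    linarith
  calc ((A ∩ Iio n).ncard : ℝ) / n ≤ (√(n : ℝ) + 1) / n := by gcongr
    _ = (√(n : ℝ))⁻¹ + (n : ℝ)⁻¹ := by rw [add_div, Real.sqrt_div_self', one_div, one_div]

lemma oneRed_image {f : ℕ → ℕ} (hf : Computable f) (hinj : Function.Injective f) (B : Set ℕ) :
    OneRed B (f '' B) :=
  ⟨f, hf, hinj, fun _ => hinj.mem_set_image.symm⟩

open Nat

def factorialBlock (n : ℕ) : ℕ := Nat.findGreatest (fun j => j ! ≤ n) n

lemma factorialBlock_eq {j n : ℕ} (h₁ : j ! ≤ n) (h₂ : n < (j + 1)!) : factorialBlock n = j := by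
  rw [factorialBlock, Nat.findGreatest_eq_iff]
  refine ⟨(self_le_factorial j).trans h₁, fun _ => h₁, fun k hjk _ hk => ?_⟩
  exact (h₂.trans_le (factorial_le hjk)).not_ge hk

def diagonalSet (S : ℕ → Set ℕ) : Set ℕ := {n | n ∉ S (factorialBlock n).unpair.1}

lemma not_densityOne_agree_diagonalSet (S : ℕ → Set ℕ) (e : ℕ) :
    ¬ DensityOne {n | n ∈ S e ↔ n ∈ diagonalSet S} := by
  set D := {n | n ∈ S e ↔ n ∈ diagonalSet S}
  intro hD
  obtain ⟨N, hN⟩ :=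
    eventually_atTop.1 (hD.eventually (lt_mem_nhds (by norm_num : (1 / 2 : ℝ) < 1)))
  set j := Nat.pair e (N + 1)
  have hj : N + 1 ≤ j := Nat.right_le_pair e (N + 1)
  have hsub : D ∩ Iio (j + 1)! ⊆ Iio j ! := by
    rintro n ⟨hn, hlt⟩
    by_contra hge
    have hdiag : n ∈ diagonalSet S ↔ n ∉ S e := by
      simp [diagonalSet, factorialBlock_eq (not_lt.1 hge) hlt, j]
    exact iff_not_self (hn.trans hdiag)
  have hcount : ((D ∩ Iio (j + 1)!).ncard : ℝ) ≤ j ! := by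
    simpa using Nat.cast_le (α := ℝ).2 (ncard_le_ncard hsub (finite_Iio _))
  have hhalf : ((D ∩ Iio (j + 1)!).ncard : ℝ) / (j + 1)! ≤ 1 / 2 := by
    have hj' : (1 : ℝ) ≤ j := by exact_mod_cast (Nat.succ_le_succ (Nat.zero_le N)).trans hj
    have hpos : (0 : ℝ) < j ! := by exact_mod_cast factorial_pos j
    have hsucc : (((j + 1)! : ℕ) : ℝ) = (j + 1) * j ! := by push_cast [factorial_succ]; ring
    rw [div_le_iff₀ (by positivity), hsucc]
    nlinarith
  exact hhalf.not_gt (hN _ ((le_succ N).trans (hj.trans ((le_succ j).trans (self_le_factorial _)))))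

lemma exists_forall_not_densityOne_agree {ι : Type*} [Countable ι] (S : ι → Set ℕ) :
    ∃ B : Set ℕ, ∀ i, ¬ DensityOne {n | n ∈ S i ↔ n ∈ B} := by
  cases isEmpty_or_nonempty ι with
  | inl _ => exact ⟨∅, isEmptyElim⟩
  | inr _ =>
    obtain ⟨g, hg⟩ := exists_surjective_nat ι
    refine ⟨diagonalSet (S ∘ g), fun i => ?_⟩
    obtain ⟨e, rfl⟩ := hg i
    exact not_densityOne_agree_diagonalSet (S ∘ g) e

namespace TuringFunctional

lemma HaltsT.unique {Φ : TuringFunctional} {C : Set ℕ} {n : ℕ} {b₁ b₂ : Bool}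
    (h₁ : Φ.HaltsT C n b₁) (h₂ : Φ.HaltsT C n b₂) : b₁ = b₂ := by
  obtain ⟨k₁, σ₁, hk₁, hσ₁⟩ := h₁
  obtain ⟨k₂, σ₂, hk₂, hσ₂⟩ := h₂
  refine Φ.consistent k₁ k₂ σ₁ σ₂ n b₁ b₂ hk₁ hk₂ fun p hp q hq hpq => ?_
  rw [Bool.eq_iff_iff, hσ₁ p hp, hσ₂ q hq, hpq]

lemma agreeSet_subset (Φ : TuringFunctional) (C B : Set ℕ) :
    Φ.AgreeSet C B ⊆ {n | Φ.HaltsT C n true ↔ n ∈ B} := by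
  rintro n ⟨b, hb, hbB⟩
  show Φ.HaltsT C n true ↔ n ∈ B
  rw [← hbB]
  exact ⟨fun h => (h.unique hb).symm, fun h => h ▸ hb⟩

instance : Countable TuringFunctional := by
  refine Function.Injective.countable (β := {f : ℕ → ℕ // Computable f})
    (f := fun Φ => ⟨fun k => Encodable.encode (Φ.axs k), Computable.encode_iff.2 Φ.axs_computable⟩)
    fun Φ Ψ h => ?_
  cases Φ; cases Ψ
  congr
  funext k
  exact Encodable.encode_injective (congrFun (Subtype.ext_iff.1 h) k)

end TuringFunctional

lemma CoarseRed.exists_densityOne_agree_empty {A B : Set ℕ} (h : CoarseRed B A)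
    (hA : DensityOne Aᶜ) : ∃ Φ : TuringFunctional, DensityOne {n | Φ.HaltsT ∅ n true ↔ n ∈ B} := by
  obtain ⟨Φ, hΦ⟩ := h
  have hempty : DensityOne {n | n ∈ (∅ : Set ℕ) ↔ n ∈ A} := by
    convert hA using 2
    ext
    simp
  exact ⟨Φ, (hΦ ∅ hempty).2.mono (Φ.agreeSet_subset ∅ B)⟩

theorem exists_one_red_not_coarse_red :
    ∃ A B : Set ℕ, OneRed B A ∧ ¬ CoarseRed B A := by
  obtain ⟨B, hB⟩ := exists_forall_not_densityOne_agree fun Φ : TuringFunctional =>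
    {n | Φ.HaltsT ∅ n true}
  have hsq : Computable fun n : ℕ => n * n := Primrec.to_comp (Primrec.nat_mul.comp .id .id)
  refine ⟨(fun n => n * n) '' B, B, oneRed_image hsq (fun _ _ => Nat.mul_self_inj.1) B, fun h => ?_⟩
  obtain ⟨Φ, hΦ⟩ := h.exists_densityOne_agree_empty
    (densityOne_compl_of_subset_range_sq (image_subset_range _ _))
  exact hB Φ hΦ
end

section
/- There exist sets A, B ⊆ ℕ such that B is mod-finite reducible to A but B is not mod-recursive reducible to A. -/
open Filter

/-!
Take `A` to be a Cohen generic set `χ` and code `B` into it in blocks of three bits: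
`B(n) = χ(3n+1)` if `χ(3n) = 1` and `B(n) = χ(3n+2)` otherwise. Reading the three bits of each
block is a mod-finite reduction. Suppose `Φ` witnessed `B ≤_mr A`. The oracles on which `Φ`
decodes correctly form a closed set, and a generic point of a closed set lies in its interior;
so if we flip every selector bit `χ(3n)` with `n ≥ k`, for `k` large, `Φ` still decodes the
flipped oracle correctly. That oracle differs from `A` on a computable set, and above `k` the
value it decodes agrees with `B(n)` exactly when `χ(3n+1) = χ(3n+2)`. Hence the computable
agreement set would decide, from some point on, which payload pairs of `χ` coincide, and no
generic `χ` allows that.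
-/

open Set Filter Topology

namespace ModFinNotModRec

section Topology

variable {ι X : Type*} [TopologicalSpace X]

theorem tendsto_of_forall_lt_eq {ψ : ℕ → ℕ → X} {χ : ℕ → X} (h : ∀ k, ∀ i < k, ψ k i = χ i) :
    Tendsto ψ atTop (𝓝 χ) :=
  tendsto_pi_nhds.2 fun i => tendsto_const_nhds.congr' <|
    (eventually_gt_atTop i).mono fun k hk => (h k i hk).symm

theorem isClopen_setOf_of_eqOn_imp [DiscreteTopology X] {P : (ι → X) → Prop} (s : Finset ι)
    (hP : ∀ χ χ', EqOn χ χ' s → P χ → P χ') : IsClopen {χ | P χ} := by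
  let r : (ι → X) → (s → X) := fun χ i => χ i
  have hpre : {χ | P χ} = r ⁻¹' (r '' {χ | P χ}) := by
    refine (subset_preimage_image r _).antisymm ?_
    rintro χ ⟨χ', hχ', hr⟩
    exact hP χ' χ (fun i hi => congrFun hr ⟨i, hi⟩) hχ'
  rw [hpre]
  exact (isClopen_discrete _).preimage (continuous_pi fun i => continuous_apply (i : ι))

end Topology

theorem countable_setOf_computable {α β : Type*} [Primcodable α] [Primcodable β] :
    {f : α → β | Computable f}.Countable := by
  let code : (α → β) → ℕ → ℕ := fun f n => Encodable.encode ((Encodable.decode n : Option α).map f)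
  refine MapsTo.countable_of_injOn (t := {g : ℕ → ℕ | Computable g}) (f := code) ?_ ?_
    (countable_coe_iff.1 (inferInstanceAs (Countable {g : ℕ → ℕ // Computable g})))
  · intro f hf
    exact Computable.encode.comp
      (Computable.option_map Computable.decode (hf.comp Computable.snd).to₂)
  · intro f _ f' _ h
    funext a
    simpa [code] using congrFun h (Encodable.encode a)

theorem countable_setOf_computablePred {α : Type*} [Primcodable α] :
    {p : α → Prop | ComputablePred p}.Countable := by
  refine ((countable_setOf_computable (β := Bool)).image fun f a => f a = true).mono ?_
  intro p hp
  obtain ⟨f, hf, rfl⟩ := ComputablePred.computable_iff.1 hp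
  exact ⟨f, hf, rfl⟩

instance : Countable TuringFunctional := by
  have : Countable {f : ℕ → Option (FinInfo × ℕ × Bool) // Computable f} :=
    countable_setOf_computable.to_subtype
  refine Function.Injective.countable
    (f := fun Φ : TuringFunctional => (⟨Φ.axs, Φ.axs_computable⟩ : {f // Computable f})) ?_
  rintro ⟨⟩ ⟨⟩ h
  cases h
  rfl

def ofBits (χ : ℕ → Bool) : Set ℕ := {n | χ n = true}

/-- Block `n` of `χ` is the selector `χ (3n)` followed by the two payload bits. -/
def decodeBits (χ : ℕ → Bool) (n : ℕ) : Bool := cond (χ (3 * n)) (χ (3 * n + 1)) (χ (3 * n + 2))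

theorem exists_ofBits_eq (C : Set ℕ) : ∃ χ, ofBits χ = C := by
  classical
  exact ⟨fun n => decide (n ∈ C), by ext; simp [ofBits]⟩

theorem agreesSet_ofBits_iff {σ : FinInfo} {χ : ℕ → Bool} :
    AgreesSet σ (ofBits χ) ↔ ∀ p ∈ σ, χ p.1 = p.2 :=
  forall₂_congr fun p _ => by rw [Bool.eq_iff_iff (a := χ p.1)]; exact Iff.comm

theorem mem_ofBits_iff_iff {ψ χ : ℕ → Bool} {n : ℕ} : (n ∈ ofBits ψ ↔ n ∈ ofBits χ) ↔ ψ n = χ n :=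
  Bool.eq_iff_iff.symm

def decoderAxiom (q : ℕ × Bool × Bool × Bool) : FinInfo × ℕ × Bool :=
  ([(3 * q.1, q.2.1), (3 * q.1 + 1, q.2.2.1), (3 * q.1 + 2, q.2.2.2)], q.1,
    cond q.2.1 q.2.2.1 q.2.2.2)

theorem primrec_decoderAxiom : Primrec decoderAxiom := by
  have hs := Primrec.fst.comp (Primrec.snd (α := ℕ) (β := Bool × Bool × Bool))
  have hu := Primrec.fst.comp (Primrec.snd.comp (Primrec.snd (α := ℕ) (β := Bool × Bool × Bool)))
  have hv := Primrec.snd.comp (Primrec.snd.comp (Primrec.snd (α := ℕ) (β := Bool × Bool × Bool)))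
  have hpos (i : ℕ) : Primrec fun q : ℕ × Bool × Bool × Bool => 3 * q.1 + i :=
    Primrec.nat_add.comp (Primrec.nat_mul.comp (Primrec.const 3) Primrec.fst) (Primrec.const i)
  exact (Primrec.list_cons.comp ((hpos 0).pair hs) <| Primrec.list_cons.comp ((hpos 1).pair hu) <|
    Primrec.list_cons.comp ((hpos 2).pair hv) (Primrec.const [])).pair
    (Primrec.fst.pair (Primrec.cond hs hu hv))

def decoderAxs (k : ℕ) : Option (FinInfo × ℕ × Bool) :=
  (Encodable.decode k).map decoderAxiom

theorem decoderAxs_encode (q : ℕ × Bool × Bool × Bool) :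
    decoderAxs (Encodable.encode q) = some (decoderAxiom q) := by
  simp [decoderAxs]

theorem decoderAxs_eq_some {k : ℕ} {σ : FinInfo} {n : ℕ} {b : Bool}
    (h : decoderAxs k = some (σ, n, b)) :
    ∃ s u v, σ = [(3 * n, s), (3 * n + 1, u), (3 * n + 2, v)] ∧ b = cond s u v := by
  obtain ⟨⟨n', s, u, v⟩, -, hq⟩ := Option.map_eq_some_iff.1 h
  simp only [decoderAxiom, Prod.mk.injEq] at hq
  obtain ⟨rfl, rfl, rfl⟩ := hq
  exact ⟨s, u, v, rfl, rfl⟩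

def decoder : TuringFunctional where
  axs := decoderAxs
  axs_computable :=
    (Primrec.option_map Primrec.decode (primrec_decoderAxiom.comp Primrec.snd).to₂).to_comp
  consistent k₁ k₂ σ₁ σ₂ n b₁ b₂ h₁ h₂ hc := by
    obtain ⟨s₁, u₁, v₁, rfl, rfl⟩ := decoderAxs_eq_some h₁
    obtain ⟨s₂, u₂, v₂, rfl, rfl⟩ := decoderAxs_eq_some h₂
    have hs : s₁ = s₂ := hc (3 * n, s₁) (by simp) (3 * n, s₂) (by simp) rfl
    have hu : u₁ = u₂ := hc (3 * n + 1, u₁) (by simp) (3 * n + 1, u₂) (by simp) rfl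
    have hv : v₁ = v₂ := hc (3 * n + 2, v₁) (by simp) (3 * n + 2, v₂) (by simp) rfl
    rw [hs, hu, hv]

theorem decoder_haltsT_iff {χ : ℕ → Bool} {n : ℕ} {b : Bool} :
    decoder.HaltsT (ofBits χ) n b ↔ b = decodeBits χ n := by
  constructor
  · rintro ⟨k, σ, hk, hag⟩
    obtain ⟨s, u, v, rfl, rfl⟩ := decoderAxs_eq_some hk
    simp only [agreesSet_ofBits_iff, List.mem_cons, List.not_mem_nil, or_false, forall_eq_or_imp,
      forall_eq] at hag
    obtain ⟨rfl, rfl, rfl⟩ := hag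
    rfl
  · rintro rfl
    let q := (n, χ (3 * n), χ (3 * n + 1), χ (3 * n + 2))
    refine ⟨Encodable.encode q, (decoderAxiom q).1, decoderAxs_encode q, ?_⟩
    simp [agreesSet_ofBits_iff, q, decoderAxiom]

theorem decoder_totalOn (C : Set ℕ) : decoder.TotalOn C := by
  obtain ⟨ψ, rfl⟩ := exists_ofBits_eq C
  exact fun n => ⟨_, decoder_haltsT_iff.2 rfl⟩

def correctSet (Φ : TuringFunctional) : Set (ℕ → Bool) :=
  {χ | ∀ n b, Φ.HaltsT (ofBits χ) n b → b = decodeBits χ n}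

theorem decoder_mem_correctSet (χ : ℕ → Bool) : χ ∈ correctSet decoder :=
  fun _ _ => decoder_haltsT_iff.1

theorem isClopen_setOf_agreesSet_imp (σ : FinInfo) (n : ℕ) (b : Bool) :
    IsClopen {χ | AgreesSet σ (ofBits χ) → b = decodeBits χ n} := by
  refine isClopen_setOf_of_eqOn_imp ((σ.map Prod.fst).toFinset ∪ {3 * n, 3 * n + 1, 3 * n + 2})
    fun χ χ' h hχ hag' => ?_
  have hσ : ∀ p ∈ σ, χ p.1 = χ' p.1 := fun p hp =>
    h (Finset.mem_coe.2 (Finset.mem_union_left _ (List.mem_toFinset.2 (List.mem_map_of_mem hp))))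
  rw [hχ (agreesSet_ofBits_iff.2 fun p hp => (hσ p hp).trans (agreesSet_ofBits_iff.1 hag' p hp)),
    decodeBits, decodeBits, h (by simp), h (by simp), h (by simp)]

theorem isClosed_correctSet (Φ : TuringFunctional) : IsClosed (correctSet Φ) := by
  have h : correctSet Φ = ⋂ (k) (σ) (n) (b) (_ : Φ.axs k = some (σ, n, b)),
      {χ | AgreesSet σ (ofBits χ) → b = decodeBits χ n} := by
    ext χ
    simp only [correctSet, TuringFunctional.HaltsT, mem_ofPred_eq, mem_iInter]
    exact ⟨fun h k σ n b hk hag => h n b ⟨k, σ, hk, hag⟩,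
      fun h n b ⟨k, σ, hk, hag⟩ => h k σ n b hk hag⟩
  rw [h]
  exact isClosed_iInter fun k => isClosed_iInter fun σ => isClosed_iInter fun n =>
    isClosed_iInter fun b => isClosed_iInter fun _ => (isClopen_setOf_agreesSet_imp σ n b).isClosed

theorem mem_agreeSet_iff_of_mem_correctSet {Φ : TuringFunctional} {ψ : ℕ → Bool}
    (hψ : ψ ∈ correctSet Φ) (htot : Φ.TotalOn (ofBits ψ)) (χ : ℕ → Bool) (n : ℕ) :
    n ∈ Φ.AgreeSet (ofBits ψ) (ofBits (decodeBits χ)) ↔ decodeBits ψ n = decodeBits χ n := by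
  constructor
  · rintro ⟨b, hb, hbχ⟩
    rw [← hψ n b hb]
    exact Bool.eq_iff_iff.2 hbχ
  · intro h
    obtain ⟨b, hb⟩ := htot n
    exact ⟨b, hb, by rw [hψ n b hb, h]; rfl⟩

theorem modFinRed_decodeBits (χ : ℕ → Bool) : ModFinRed (ofBits (decodeBits χ)) (ofBits χ) := by
  refine ⟨decoder, ⟨decoder_totalOn _, fun n b hb => ?_⟩, fun C hC => ⟨decoder_totalOn C, ?_⟩⟩
  · rw [decoder_haltsT_iff.1 hb]
    rfl
  obtain ⟨ψ, rfl⟩ := exists_ofBits_eq C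
  -- A wrong output in block `n` needs a changed oracle bit in block `n`.
  refine (hC.image (· / 3)).subset fun n hn => by_contra fun hnot => hn ?_
  have hblock : ∀ m, m / 3 = n → ψ m = χ m := fun m hm =>
    by_contra fun hne => hnot ⟨m, mt mem_ofBits_iff_iff.1 hne, hm⟩
  rw [mem_agreeSet_iff_of_mem_correctSet (decoder_mem_correctSet ψ) (decoder_totalOn _),
    decodeBits, decodeBits, hblock (3 * n) (by omega), hblock (3 * n + 1) (by omega),
    hblock (3 * n + 2) (by omega)]

def flipSelectors (k : ℕ) (χ : ℕ → Bool) (m : ℕ) : Bool :=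
  xor (χ m) (decide (m % 3 = 0 ∧ k ≤ m / 3))

theorem computablePred_ofBits_flipSelectors_iff (k : ℕ) (χ : ℕ → Bool) :
    ComputablePred fun n => (n ∈ ofBits (flipSelectors k χ) ↔ n ∈ ofBits χ) := by
  refine (PrimrecPred.and (Primrec.eq.comp (Primrec.nat_mod.comp Primrec.id (Primrec.const 3))
    (Primrec.const 0)) (Primrec.nat_le.comp (Primrec.const k)
    (Primrec.nat_div.comp Primrec.id (Primrec.const 3)))).not.computablePred.of_eq fun n => ?_
  rw [mem_ofBits_iff_iff]
  by_cases h : n % 3 = 0 ∧ k ≤ n / 3 <;> simp [flipSelectors, h]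

theorem tendsto_flipSelectors (χ : ℕ → Bool) :
    Tendsto (fun k => flipSelectors k χ) atTop (𝓝 χ) :=
  tendsto_of_forall_lt_eq fun k i hi => by
    have : ¬(i % 3 = 0 ∧ k ≤ i / 3) := by omega
    simp [flipSelectors, this]

theorem decodeBits_flipSelectors_eq_iff {k n : ℕ} (hn : k ≤ n) (χ : ℕ → Bool) :
    decodeBits (flipSelectors k χ) n = decodeBits χ n ↔ χ (3 * n + 1) = χ (3 * n + 2) := by
  have h1 : (3 * n + 1) % 3 ≠ 0 := by omega
  have h2 : (3 * n + 2) % 3 ≠ 0 := by omega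
  simp only [decodeBits, flipSelectors, h1, h2, false_and, decide_false, Bool.xor_false]
  cases χ (3 * n) <;> cases χ (3 * n + 1) <;> cases χ (3 * n + 2) <;> simp [hn]

def payloadEqSet (p : ℕ → Prop) (j : ℕ) : Set (ℕ → Bool) :=
  {χ | ∀ n ≥ j, (χ (3 * n + 1) = χ (3 * n + 2) ↔ p n)}

theorem isClosed_payloadEqSet (p : ℕ → Prop) (j : ℕ) : IsClosed (payloadEqSet p j) := by
  have h : payloadEqSet p j = ⋂ (n) (_ : n ≥ j),
      (fun χ : ℕ → Bool => (χ (3 * n + 1), χ (3 * n + 2))) ⁻¹' {x | x.1 = x.2 ↔ p n} := by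
    ext χ
    simp [payloadEqSet]
  rw [h]
  exact isClosed_iInter fun n => isClosed_iInter fun _ =>
    (isClosed_discrete _).preimage (by fun_prop)

theorem dense_compl_payloadEqSet (p : ℕ → Prop) (j : ℕ) : Dense (payloadEqSet p j)ᶜ := by
  classical
  intro χ
  -- Set the second payload bit of block `n` so that the pair coincides iff `¬ p n`.
  let ψ : ℕ → ℕ → Bool := fun n =>
    Function.update χ (3 * n + 2) (xor (χ (3 * n + 1)) (decide (p n)))
  refine mem_closure_of_tendsto (tendsto_of_forall_lt_eq (ψ := ψ) fun n i hi => ?_)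
    ((eventually_ge_atTop j).mono fun n hn hψ => ?_)
  · exact Function.update_of_ne (by omega) _ _
  · have := hψ n hn
    simp only [ψ, Function.update_self,
      Function.update_of_ne (show 3 * n + 1 ≠ 3 * n + 2 by omega)] at this
    by_cases hp : p n <;> cases χ (3 * n + 1) <;> simp_all

theorem isNowhereDense_payloadEqSet (p : ℕ → Prop) (j : ℕ) : IsNowhereDense (payloadEqSet p j) :=
  (isClosed_payloadEqSet p j).isNowhereDense_iff.2
    (interior_eq_empty_iff_dense_compl.2 (dense_compl_payloadEqSet p j))

def IsGeneric (χ : ℕ → Bool) : Prop :=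
  (∀ Φ : TuringFunctional, χ ∉ frontier (correctSet Φ)) ∧
    ∀ p : ℕ → Prop, ComputablePred p → ∀ j, χ ∉ payloadEqSet p j

theorem exists_isGeneric : ∃ χ, IsGeneric χ := by
  have : Countable {p : ℕ → Prop // ComputablePred p} := countable_setOf_computablePred.to_subtype
  have hmeagre : IsMeagre ((⋃ Φ : TuringFunctional, frontier (correctSet Φ)) ∪
      ⋃ (p : {p : ℕ → Prop // ComputablePred p}) (j), payloadEqSet p j) :=
    (isMeagre_iUnion fun Φ => (isClosed_frontier.isNowhereDense_iff.2
        (interior_frontier (isClosed_correctSet Φ))).isMeagre).union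
      (isMeagre_iUnion fun p => isMeagre_iUnion fun j => (isNowhereDense_payloadEqSet p j).isMeagre)
  obtain ⟨χ, hχ⟩ := (dense_of_mem_residual hmeagre).nonempty
  simp only [mem_compl_iff, mem_union, mem_iUnion, not_or, not_exists] at hχ
  exact ⟨χ, hχ.1, fun p hp j => hχ.2 ⟨p, hp⟩ j⟩

theorem not_modRecRed_of_isGeneric {χ : ℕ → Bool} (hχ : IsGeneric χ) :
    ¬ ModRecRed (ofBits (decodeBits χ)) (ofBits χ) := by
  rintro ⟨Φ, ⟨-, hΦ⟩, hrec⟩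
  have hcorrect : χ ∈ correctSet Φ := fun n b hb => Bool.eq_iff_iff.2 (hΦ n b hb)
  have hint : χ ∈ interior (correctSet Φ) :=
    by_contra fun h => hχ.1 Φ ⟨subset_closure hcorrect, h⟩
  obtain ⟨k, hk⟩ := ((tendsto_flipSelectors χ).eventually (isOpen_interior.mem_nhds hint)).exists
  obtain ⟨htot, hagree⟩ := hrec _ (computablePred_ofBits_flipSelectors_iff k χ)
  refine hχ.2 _ hagree k fun n hn => ?_
  exact ((mem_agreeSet_iff_of_mem_correctSet (interior_subset hk) htot χ n).trans
    (decodeBits_flipSelectors_eq_iff hn χ)).symm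

end ModFinNotModRec

theorem exists_mod_finite_red_not_mod_recursive_red :
    ∃ A B : Set ℕ, ModFinRed B A ∧ ¬ ModRecRed B A :=
  let ⟨χ, hχ⟩ := ModFinNotModRec.exists_isGeneric
  ⟨_, _, ModFinNotModRec.modFinRed_decodeBits χ, ModFinNotModRec.not_modRecRed_of_isGeneric hχ⟩
end

section
/- There exist sets A, B ⊆ ℕ such that B is mod-recursive reducible to A but B is not cofinitely reducible to A. -/
open Filter

/-!
Take `B = prefixParity A`, the set of `n` such that `A ∩ [0, n)` has odd size. It is computed
from `A` by reading the first `n` bits, and if `C` agrees with `A` exactly on a computable set,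
then that computation with oracle `C` is right at `n` iff the number of disagreements below `n`
is even, which is decidable: so `B ≤_mr A` for every `A`.

`A` is then built by finite extensions, defeating one functional `Φ` at a time. If `τ` is the
current string and `m = |τ|`, either `Φ` diverges at infinitely many inputs whenever bit `m` of
the oracle is withheld, and then `Φ` is no cofinite reduction for any `A` extending `τ`; or it
converges at some `n > m` without using bit `m`, and choosing bit `m` so as to fix the parity of
`A` below `n` makes that answer wrong.
-/

theorem Set.boolIndicator_eq_iff {α : Type*} {s : Set α} {x : α} {b : Bool} :
    s.boolIndicator x = b ↔ (b = true ↔ x ∈ s) := by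
  rw [s.mem_iff_boolIndicator]
  cases s.boolIndicator x <;> cases b <;> simp

theorem Set.boolIndicator_eq_boolIndicator_iff {α : Type*} {s t : Set α} {x : α} :
    s.boolIndicator x = t.boolIndicator x ↔ (x ∈ s ↔ x ∈ t) := by
  rw [Set.boolIndicator_eq_iff, ← t.mem_iff_boolIndicator]
  exact iff_comm

def parity (f : ℕ → Bool) : ℕ → Bool
  | 0 => false
  | n + 1 => xor (parity f n) (f n)

theorem parity_congr {f g : ℕ → Bool} {n : ℕ} (h : ∀ i < n, f i = g i) :
    parity f n = parity g n := by
  induction n with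
  | zero => rfl
  | succ n ih =>
    simp only [parity, ih fun i hi => h i (by omega), h n n.lt_succ_self]

theorem parity_xor (f g : ℕ → Bool) (n : ℕ) :
    parity (fun i => xor (f i) (g i)) n = xor (parity f n) (parity g n) := by
  induction n with
  | zero => rfl
  | succ n ih =>
    simp only [parity, ih]
    cases parity f n <;> cases parity g n <;> cases f n <;> cases g n <;> rfl

theorem parity_update (f : ℕ → Bool) {m n : ℕ} (h : m < n) (c : Bool) :
    parity (Function.update f m c) n = xor (parity f n) (xor (f m) c) := by
  induction n, h using Nat.le_induction with
  | base =>
    have hbelow : parity (Function.update f m c) m = parity f m :=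
      parity_congr fun i hi => Function.update_of_ne hi.ne _ _
    simp only [parity, Function.update_self, hbelow]
    cases parity f m <;> cases f m <;> cases c <;> rfl
  | succ n hmn ih =>
    simp only [parity, ih, Function.update_of_ne (show n ≠ m by omega)]
    cases parity f n <;> cases f n <;> cases f m <;> cases c <;> rfl

theorem foldl_xor_map_range (f : ℕ → Bool) (n : ℕ) :
    ((List.range n).map f).foldl xor false = parity f n := by
  induction n with
  | zero => rfl
  | succ n ih => simp [List.range_succ, ih, parity]

theorem Computable.parity {f : ℕ → Bool} (hf : Computable f) : Computable (parity f) := by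
  have hstep : Computable₂ fun (_ : ℕ) (p : ℕ × Bool) => xor p.2 (f p.1) :=
    ((Primrec.dom_bool₂ xor).to_comp.comp (Computable.snd.comp Computable.snd)
      (hf.comp (Computable.fst.comp Computable.snd))).to₂
  refine (Computable.nat_rec Computable.id (Computable.const false) hstep).of_eq fun n => ?_
  induction n with
  | zero => rfl
  | succ n ih => exact congrArg (xor · (f n)) ih

def prefixParity (A : Set ℕ) : Set ℕ := {n | parity A.boolIndicator n = true}

noncomputable def initialSegment (A : Set ℕ) (n : ℕ) : List Bool :=
  (List.range n).map A.boolIndicator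

def Extends (A : Set ℕ) (τ : List Bool) : Prop := initialSegment A τ.length = τ

@[simp]
theorem length_initialSegment (A : Set ℕ) (n : ℕ) : (initialSegment A n).length = n := by
  simp [initialSegment]

theorem initialSegment_eq_iff {A A' : Set ℕ} {n : ℕ} :
    initialSegment A n = initialSegment A' n ↔ ∀ i < n, (i ∈ A ↔ i ∈ A') := by
  simp [initialSegment, List.map_inj_left, Set.boolIndicator_eq_boolIndicator_iff]

theorem extends_initialSegment_iff {A A' : Set ℕ} {n : ℕ} :
    Extends A (initialSegment A' n) ↔ ∀ i < n, (i ∈ A ↔ i ∈ A') := by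
  rw [Extends, length_initialSegment, initialSegment_eq_iff]

theorem initialSegment_prefix (A : Set ℕ) {m n : ℕ} (h : m ≤ n) :
    initialSegment A m <+: initialSegment A n := by
  rw [List.prefix_iff_eq_take, length_initialSegment]
  simp only [initialSegment, ← List.map_take, List.take_range, min_eq_left h]

def bitGraph (w : List Bool) : FinInfo :=
  (List.range w.length).map fun i => (i, w.getD i false)

theorem mem_bitGraph {w : List Bool} {p : ℕ × Bool} :
    p ∈ bitGraph w ↔ ∃ i < w.length, p = (i, w.getD i false) := by
  simp [bitGraph, eq_comm]

theorem agreesSet_bitGraph_iff {w : List Bool} {C : Set ℕ} :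
    AgreesSet (bitGraph w) C ↔ Extends C w := by
  have hbit : ∀ i (hi : i < w.length),
      (w.getD i false = true ↔ i ∈ C) ↔ C.boolIndicator i = w[i] := fun i hi => by
    rw [List.getD_eq_getElem _ _ hi, Set.boolIndicator_eq_iff]
  constructor
  · intro h
    refine List.ext_getElem (length_initialSegment _ _) fun i _ hi => ?_
    simpa [initialSegment] using (hbit i hi).1 (h _ (mem_bitGraph.2 ⟨i, hi, rfl⟩))
  · rintro h p hp
    obtain ⟨i, hi, rfl⟩ := mem_bitGraph.1 hp
    refine (hbit i hi).2 ?_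
    simpa [initialSegment] using List.getElem_of_eq h (by simpa using hi)

theorem eq_of_compatible_bitGraph {w₁ w₂ : List Bool} (hlen : w₁.length = w₂.length)
    (h : (bitGraph w₁).Compatible (bitGraph w₂)) : w₁ = w₂ := by
  refine List.ext_getElem hlen fun i hi₁ hi₂ => ?_
  have := h _ (mem_bitGraph.2 ⟨i, hi₁, rfl⟩) _ (mem_bitGraph.2 ⟨i, hi₂, rfl⟩) rfl
  simpa [List.getD_eq_getElem, hi₁, hi₂] using this

def parityAxiom (w : List Bool) : FinInfo × ℕ × Bool :=
  (bitGraph w, w.length, w.foldl xor false)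

theorem primrec_parityAxiom : Primrec parityAxiom := by
  have hgraph : Primrec bitGraph :=
    Primrec.list_map (Primrec.list_range.comp Primrec.list_length)
      (Primrec.pair Primrec.snd ((Primrec.list_getD false).comp Primrec.fst Primrec.snd))
  have hfold : Primrec fun w : List Bool => w.foldl xor false :=
    Primrec.list_foldl Primrec.id (Primrec.const false)
      ((Primrec.dom_bool₂ xor).comp (Primrec.fst.comp Primrec.snd)
        (Primrec.snd.comp Primrec.snd)).to₂
  exact hgraph.pair (Primrec.list_length.pair hfold)

def parityFunctional : TuringFunctional where
  axs k := (Encodable.decode k).map parityAxiom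
  axs_computable :=
    (Primrec.option_map Primrec.decode (primrec_parityAxiom.comp Primrec.snd).to₂).to_comp
  consistent := by
    intro k₁ k₂ σ₁ σ₂ n b₁ b₂ h₁ h₂ hcomp
    obtain ⟨w₁, -, hw₁⟩ := Option.map_eq_some_iff.1 h₁
    obtain ⟨w₂, -, hw₂⟩ := Option.map_eq_some_iff.1 h₂
    simp only [parityAxiom, Prod.mk.injEq] at hw₁ hw₂
    obtain ⟨rfl, rfl, rfl⟩ := hw₁
    obtain ⟨rfl, hlen, rfl⟩ := hw₂
    rw [eq_of_compatible_bitGraph hlen.symm hcomp]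

theorem haltsT_parityFunctional_iff {C : Set ℕ} {n : ℕ} {b : Bool} :
    parityFunctional.HaltsT C n b ↔ b = parity C.boolIndicator n := by
  constructor
  · rintro ⟨k, σ, hk, hσ⟩
    obtain ⟨w, -, hw⟩ := Option.map_eq_some_iff.1 hk
    simp only [parityAxiom, Prod.mk.injEq] at hw
    obtain ⟨rfl, rfl, rfl⟩ := hw
    rw [← foldl_xor_map_range]
    exact congrArg (List.foldl xor false) (agreesSet_bitGraph_iff.1 hσ).symm
  · rintro rfl
    refine ⟨Encodable.encode (initialSegment C n), bitGraph (initialSegment C n), ?_, ?_⟩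
    · simp [parityFunctional, parityAxiom, initialSegment, foldl_xor_map_range]
    · exact agreesSet_bitGraph_iff.2 (by rw [Extends, length_initialSegment])

theorem parityFunctional_totalOn (C : Set ℕ) : parityFunctional.TotalOn C :=
  fun _ => ⟨_, haltsT_parityFunctional_iff.2 rfl⟩

theorem mem_agreeSet_parityFunctional_iff {C B : Set ℕ} {n : ℕ} :
    n ∈ parityFunctional.AgreeSet C B ↔ (parity C.boolIndicator n = true ↔ n ∈ B) := by
  simp [TuringFunctional.AgreeSet, haltsT_parityFunctional_iff]

theorem modRecRed_prefixParity (A : Set ℕ) : ModRecRed (prefixParity A) A := by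
  refine ⟨parityFunctional, ⟨parityFunctional_totalOn A, fun n b h => ?_⟩,
    fun C hC => ⟨parityFunctional_totalOn C, ?_⟩⟩
  · rw [haltsT_parityFunctional_iff.1 h]
    rfl
  obtain ⟨f, hf, hCA⟩ := ComputablePred.computable_iff.1 hC
  have hdiff : (fun i => xor (C.boolIndicator i) (A.boolIndicator i)) = fun i => !f i := by
    funext i
    have hi : (i ∈ C ↔ i ∈ A) ↔ f i = true := iff_of_eq (congrFun hCA i)
    rw [C.mem_iff_boolIndicator, A.mem_iff_boolIndicator] at hi
    revert hi
    cases f i <;> cases C.boolIndicator i <;> cases A.boolIndicator i <;> simp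
  have hagree : ∀ n, n ∈ parityFunctional.AgreeSet C (prefixParity A) ↔
      (!parity (fun i => !f i) n) = true := by
    intro n
    rw [mem_agreeSet_parityFunctional_iff, prefixParity, Set.mem_ofPred_eq, ← hdiff, parity_xor]
    cases parity C.boolIndicator n <;> cases parity A.boolIndicator n <;> simp
  exact ComputablePred.computable_iff.2
    ⟨_, Primrec.not.to_comp.comp (Primrec.not.to_comp.comp hf).parity,
      funext fun n => propext (hagree n)⟩

theorem exists_extends_of_prefix_chain (T : ℕ → List Bool) (hT : ∀ k, T k <+: T (k + 1)) :
    ∃ A : Set ℕ, ∀ k, Extends A (T k) := by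
  have hmono : ∀ {j k}, j ≤ k → T j <+: T k := fun h => by
    induction h with
    | refl => exact List.prefix_refl _
    | step _ ih => exact ih.trans (hT _)
  refine ⟨{i | ∃ k, ∃ h : i < (T k).length, (T k)[i] = true}, fun k => ?_⟩
  refine List.ext_getElem (length_initialSegment _ _) fun i _ hi => ?_
  simp only [initialSegment, List.getElem_map, List.getElem_range, Set.boolIndicator_eq_iff]
  constructor
  · exact fun h => ⟨k, hi, h⟩
  · rintro ⟨j, hj, hbit⟩
    rcases le_total j k with hjk | hkj
    · rwa [← (hmono hjk).getElem hj]
    · rwa [(hmono hkj).getElem hi]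

theorem exists_forall_of_forall_exists_extends {ι : Type*} [Countable ι]
    (P : ι → Set ℕ → Prop) (h : ∀ i τ, ∃ τ', τ <+: τ' ∧ ∀ A, Extends A τ' → P i A) :
    ∃ A, ∀ i, P i A := by
  rcases isEmpty_or_nonempty ι with _ | _
  · exact ⟨∅, isEmptyElim⟩
  obtain ⟨e, he⟩ := exists_surjective_nat ι
  choose next hprefix hnext using h
  let T : ℕ → List Bool := fun k => Nat.rec [] (fun j τ => next (e j) τ) k
  obtain ⟨A, hA⟩ := exists_extends_of_prefix_chain T fun k => hprefix (e k) (T k)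
  refine ⟨A, fun i => ?_⟩
  obtain ⟨k, rfl⟩ := he i
  exact hnext (e k) (T k) A (hA (k + 1))

instance : Countable TuringFunctional := by
  refine Function.Injective.countable (f := fun Φ : TuringFunctional =>
    (⟨fun k => Encodable.encode (Φ.axs k), Computable.encode.comp Φ.axs_computable⟩ :
      {f : ℕ → ℕ // Computable f})) ?_
  rintro ⟨a, _, _⟩ ⟨b, _, _⟩ h
  obtain rfl : a = b :=
    funext fun k => Encodable.encode_injective (congrFun (congrArg Subtype.val h) k)
  rfl

noncomputable def puncture (A : Set ℕ) (m : ℕ) : ℕ →. Bool :=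
  fun i => ⟨i ≠ m, fun _ => A.boolIndicator i⟩

theorem mem_puncture_iff {A : Set ℕ} {m i : ℕ} {b : Bool} :
    b ∈ puncture A m i ↔ i ≠ m ∧ A.boolIndicator i = b :=
  Part.mem_mk_iff.trans exists_prop

theorem isPartialOracle_puncture (A : Set ℕ) (m : ℕ) : IsPartialOracle (puncture A m) A :=
  fun _ _ hb => Set.boolIndicator_eq_iff.1 (mem_puncture_iff.1 hb).2

theorem compl_pDom_puncture (A : Set ℕ) (m : ℕ) : (pDom (puncture A m))ᶜ = {m} := by
  ext i
  simp [pDom, puncture]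

theorem agreesPart_puncture_iff {σ : FinInfo} {A : Set ℕ} {m : ℕ} :
    AgreesPart σ (puncture A m) ↔ (∀ p ∈ σ, p.1 ≠ m) ∧ AgreesSet σ A := by
  simp only [AgreesPart, AgreesSet, mem_puncture_iff, Set.boolIndicator_eq_iff]
  exact forall₂_and

def TuringFunctional.IsCofinReduction (Φ : TuringFunctional) (B A : Set ℕ) : Prop :=
  Φ.FunEq A B ∧ ∀ g : ℕ →. Bool, IsPartialOracle g A → (pDom g)ᶜ.Finite →
    Φ.PAgrees g B ∧ (Φ.PDomain g)ᶜ.Finite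

theorem TuringFunctional.not_isCofinReduction_of_infinite {Φ : TuringFunctional} {τ : List Bool}
    (h : {n | ∀ A, Extends A τ → n ∉ Φ.PDomain (puncture A τ.length)}.Infinite)
    {A B : Set ℕ} (hA : Extends A τ) : ¬ Φ.IsCofinReduction B A := fun hΦ =>
  have hdom : (pDom (puncture A τ.length))ᶜ.Finite := by
    rw [compl_pDom_puncture]
    exact Set.finite_singleton _
  h (((hΦ.2 _ (isPartialOracle_puncture A _) hdom).2).subset fun n hn => hn A hA)

theorem exists_parity_eq_of_lt (A₀ : Set ℕ) {m n : ℕ} (h : m < n) (d : Bool) :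
    ∃ A₁ : Set ℕ, (∀ i ≠ m, (i ∈ A₁ ↔ i ∈ A₀)) ∧ parity A₁.boolIndicator n = d := by
  let f := Function.update A₀.boolIndicator m
    (xor (A₀.boolIndicator m) (xor (parity A₀.boolIndicator n) d))
  have hf : {i | f i = true}.boolIndicator = f :=
    funext fun i => Set.boolIndicator_eq_iff.2 Iff.rfl
  refine ⟨{i | f i = true}, fun i hi => ?_, ?_⟩
  · rw [Set.mem_iff_boolIndicator, hf, A₀.mem_iff_boolIndicator,
      show f i = A₀.boolIndicator i from Function.update_of_ne hi _ _]
  · rw [hf, parity_update _ h]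
    cases A₀.boolIndicator m <;> cases parity A₀.boolIndicator n <;> cases d <;> rfl

theorem TuringFunctional.exists_extension_not_funEq (Φ : TuringFunctional) {τ : List Bool}
    {n : ℕ} (hn : τ.length < n) {A₀ : Set ℕ} (hA₀ : Extends A₀ τ)
    (hhalt : n ∈ Φ.PDomain (puncture A₀ τ.length)) :
    ∃ τ', τ <+: τ' ∧ ∀ A, Extends A τ' → ¬ Φ.FunEq A (prefixParity A) := by
  obtain ⟨b, k, σ, hk, hσ⟩ := hhalt
  obtain ⟨hσm, hσA₀⟩ := agreesPart_puncture_iff.1 hσ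
  obtain ⟨A₁, hA₁, hpar⟩ := exists_parity_eq_of_lt A₀ hn (!b)
  obtain ⟨N, hnN, hσN⟩ : ∃ N, n ≤ N ∧ ∀ p ∈ σ, p.1 < N :=
    ⟨n + (σ.map Prod.fst).sum + 1, by omega, fun p hp =>
      have := List.le_sum_of_mem (List.mem_map_of_mem (f := Prod.fst) hp)
      by omega⟩
  refine ⟨initialSegment A₁ N, ?_, fun A hA hΦ => ?_⟩
  · have hA₁τ : initialSegment A₁ τ.length = τ :=
      (initialSegment_eq_iff.2 fun i hi => hA₁ i hi.ne).trans hA₀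
    rw [← hA₁τ]
    exact initialSegment_prefix A₁ (by omega)
  rw [extends_initialSegment_iff] at hA
  -- `σ` does not query the flipped bit, so it is answered by `A` as it was by `A₀`
  have hhalts : Φ.HaltsT A n b := ⟨k, σ, hk, fun p hp =>
    (hσA₀ p hp).trans ((hA₁ _ (hσm p hp)).symm.trans (hA _ (hσN p hp)).symm)⟩
  have hparity : parity A.boolIndicator n = !b :=
    (parity_congr fun i hi => Set.boolIndicator_eq_boolIndicator_iff.2 (hA i (by omega))).trans
      hpar
  have hcorrect := hΦ.2 n b hhalts
  cases b <;> simp_all [prefixParity]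

theorem TuringFunctional.exists_extension_not_isCofinReduction (Φ : TuringFunctional)
    (τ : List Bool) :
    ∃ τ', τ <+: τ' ∧ ∀ A, Extends A τ' → ¬ Φ.IsCofinReduction (prefixParity A) A := by
  by_cases hinf : {n | ∀ A, Extends A τ → n ∉ Φ.PDomain (puncture A τ.length)}.Infinite
  · exact ⟨τ, List.prefix_refl τ, fun A hA => Φ.not_isCofinReduction_of_infinite hinf hA⟩
  obtain ⟨M, hM⟩ := (Set.not_infinite.1 hinf).bddAbove
  obtain ⟨A₀, hA₀, hhalt⟩ : ∃ A₀, Extends A₀ τ ∧ max M τ.length + 1 ∈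
      Φ.PDomain (puncture A₀ τ.length) := by
    by_contra! hnot
    have := hM hnot
    omega
  obtain ⟨τ', hτ', hnot⟩ := Φ.exists_extension_not_funEq (by omega) hA₀ hhalt
  exact ⟨τ', hτ', fun A hA hΦ => hnot A hA hΦ.1⟩

theorem exists_mod_recursive_red_not_cofinite_red :
    ∃ A B : Set ℕ, ModRecRed B A ∧ ¬ CofinRed B A := by
  obtain ⟨A, hA⟩ := exists_forall_of_forall_exists_extends
    (fun (Φ : TuringFunctional) A => ¬ Φ.IsCofinReduction (prefixParity A) A)
    TuringFunctional.exists_extension_not_isCofinReduction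
  exact ⟨A, prefixParity A, modRecRed_prefixParity A, fun ⟨Φ, hΦ⟩ => hA Φ hΦ⟩
end

section
/- There exist sets A, B ⊆ ℕ such that B is use-bounded-from-below reducible to A but B is not mod-finite reducible to A. -/
open Filter

/-!
Take `A` to be the graph `{⟨n, f n⟩}` of a function `f : ℕ → ℕ` and `B = {n | f n is odd}`.
Searching column `n` of `A` for its unique element computes `B(n)` from `A` while querying
only column `n`, so `B ≤_ubfb A` for every `f`.

For a generic `f` in the Baire space `ℕ → ℕ`, however, no `Φ` is a mod-finite reduction.
Given a cylinder `[x ↾ L]`, either some `g` in it already forces a halting computation of `Φ`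
with a wrong answer, or every `f ∈ [x ↾ L]` defeats `Φ`: `Φ` would have to halt at `L` on the
finite variant of `graph f` with column `L` erased, and moving `f L` beyond the finitely many
positions that computation inspects, with the parity opposite to its output, gives such a `g`.
-/

open PiNat

def graphSet (f : ℕ → ℕ) : Set ℕ := {x | f x.unpair.1 = x.unpair.2}

def oddSet (f : ℕ → ℕ) : Set ℕ := {n | (f n).bodd}

@[simp]
theorem pair_mem_graphSet {f : ℕ → ℕ} {n j : ℕ} : Nat.pair n j ∈ graphSet f ↔ f n = j := by
  simp [graphSet]

/-- The queries with which the search through column `n` confirms that `f n = j`. -/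
def graphQuery (n j : ℕ) : FinInfo :=
  (List.range (j + 1)).map fun i => (Nat.pair n i, decide (i = j))

theorem mem_graphQuery {n j : ℕ} {p : ℕ × Bool} :
    p ∈ graphQuery n j ↔ ∃ i ≤ j, (Nat.pair n i, decide (i = j)) = p := by
  simp [graphQuery]

theorem agreesSet_graphQuery_iff {f : ℕ → ℕ} {n j : ℕ} :
    AgreesSet (graphQuery n j) (graphSet f) ↔ f n = j := by
  refine ⟨fun h => by simpa using h _ (mem_graphQuery.2 ⟨j, le_rfl, rfl⟩), ?_⟩
  rintro rfl p hp
  obtain ⟨i, -, rfl⟩ := mem_graphQuery.1 hp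
  simp [eq_comm]

theorem eq_of_compatible_graphQuery {n i j : ℕ}
    (h : (graphQuery n i).Compatible (graphQuery n j)) : i = j := by
  rcases le_total i j with hij | hji
  · simpa using h _ (mem_graphQuery.2 ⟨i, le_rfl, rfl⟩) _ (mem_graphQuery.2 ⟨i, hij, rfl⟩) rfl
  · simpa [eq_comm] using
      h _ (mem_graphQuery.2 ⟨j, hji, rfl⟩) _ (mem_graphQuery.2 ⟨j, le_rfl, rfl⟩) rfl

theorem unpair_fst_of_mem_graphQuery {n j : ℕ} {p : ℕ × Bool} (hp : p ∈ graphQuery n j) :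
    p.1.unpair.1 = n := by
  obtain ⟨i, -, rfl⟩ := mem_graphQuery.1 hp
  simp

theorem primrec₂_graphQuery : Primrec₂ graphQuery :=
  Primrec.list_map (Primrec.list_range.comp (Primrec.succ.comp Primrec.snd)) <|
    Primrec.pair (Primrec₂.natPair.comp (Primrec.fst.comp Primrec.fst) Primrec.snd)
      (Primrec.eq.decide.comp Primrec.snd (Primrec.snd.comp Primrec.fst))

namespace TuringFunctional

/-- Axiom `⟨n, j⟩` says: if `f n = j`, output the parity of `j` on input `n`. -/
def graphSearch : TuringFunctional where
  axs k := some (graphQuery k.unpair.1 k.unpair.2, k.unpair.1, k.unpair.2.bodd)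
  axs_computable := Primrec.to_comp <| Primrec.option_some.comp <|
    Primrec.pair (primrec₂_graphQuery.comp (Primrec.fst.comp Primrec.unpair)
      (Primrec.snd.comp Primrec.unpair)) <|
    Primrec.pair (Primrec.fst.comp Primrec.unpair) (Primrec.nat_bodd.comp
      (Primrec.snd.comp Primrec.unpair))
  consistent := by
    rintro k₁ k₂ σ₁ σ₂ n b₁ b₂ ⟨⟩ h₂ hc
    simp only [Option.some.injEq, Prod.mk.injEq] at h₂
    obtain ⟨rfl, hn, rfl⟩ := h₂
    rw [← hn] at hc
    rw [eq_of_compatible_graphQuery hc]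

theorem graphSearch_axs_eq_some {k n : ℕ} {σ : FinInfo} {b : Bool}
    (h : graphSearch.axs k = some (σ, n, b)) :
    ∃ j, σ = graphQuery n j ∧ b = j.bodd := by
  simp only [graphSearch, Option.some.injEq, Prod.mk.injEq] at h
  obtain ⟨rfl, rfl, rfl⟩ := h
  exact ⟨_, rfl, rfl⟩

theorem graphSearch_funEq (f : ℕ → ℕ) : graphSearch.FunEq (graphSet f) (oddSet f) := by
  refine ⟨fun n => ⟨(f n).bodd, Nat.pair n (f n), graphQuery n (f n), by simp [graphSearch],
    agreesSet_graphQuery_iff.2 rfl⟩, ?_⟩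
  rintro n b ⟨k, σ, hk, hσ⟩
  obtain ⟨j, rfl, rfl⟩ := graphSearch_axs_eq_some hk
  simp [oddSet, agreesSet_graphQuery_iff.1 hσ]

theorem not_graphSearch_queriesAt {C : Set ℕ} {n m : ℕ} (h : m.unpair.1 < n) :
    ¬ graphSearch.QueriesAt C n m := by
  rintro ⟨k, σ, b, hk, -, -, p, hp, rfl⟩
  obtain ⟨j, rfl, -⟩ := graphSearch_axs_eq_some hk
  exact h.ne (unpair_fst_of_mem_graphQuery hp)

end TuringFunctional

theorem ubfbRed_oddSet_graphSet (f : ℕ → ℕ) : UbfbRed (oddSet f) (graphSet f) :=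
  ⟨_, TuringFunctional.graphSearch_funEq f, fun m => (eventually_gt_atTop m.unpair.1).mono
    fun _ h => TuringFunctional.not_graphSearch_queriesAt h⟩

instance inst_s17 : Countable TuringFunctional := by
  refine Function.Injective.countable (β := {g : ℕ → ℕ // Computable g})
    (f := fun Φ => ⟨fun k => Encodable.encode (Φ.axs k),
      Computable.encode.comp Φ.axs_computable⟩) ?_
  rintro ⟨axs, _, _⟩ ⟨axs', _, _⟩ h
  obtain rfl : axs = axs' :=
    funext fun k => Encodable.encode_injective (congrFun (congrArg Subtype.val h) k)
  rfl

theorem mem_graphSet_update_iff {f : ℕ → ℕ} {L j x : ℕ} (hx : x.unpair.2 < j) :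
    x ∈ graphSet (Function.update f L j) ↔ x ∈ graphSet f \ {Nat.pair L (f L)} := by
  obtain ⟨c, v, rfl⟩ : ∃ c v, x = Nat.pair c v := ⟨_, _, (Nat.pair_unpair x).symm⟩
  simp only [Nat.unpair_pair] at hx
  by_cases hc : c = L
  · subst hc
    simp [hx.ne', eq_comm]
  · simp [hc]

def SettledBelow (σ : FinInfo) (g : ℕ → ℕ) (M : ℕ) : Prop :=
  ∀ p ∈ σ, p.1.unpair.1 < M ∧ (p.2 = true ↔ p.1 ∈ graphSet g)

theorem SettledBelow.agreesSet {σ : FinInfo} {g f : ℕ → ℕ} {M : ℕ} (hσ : SettledBelow σ g M)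
    (hf : f ∈ cylinder g M) : AgreesSet σ (graphSet f) := by
  intro p hp
  obtain ⟨hlt, hiff⟩ := hσ p hp
  rwa [graphSet, Set.mem_ofPred_eq, hf _ hlt]

namespace TuringFunctional

variable (Φ : TuringFunctional)

def modFinFailures : Set (ℕ → ℕ) :=
  {f | Φ.FunEq (graphSet f) (oddSet f) →
    ∃ C : Set ℕ, {n | ¬ (n ∈ C ↔ n ∈ graphSet f)}.Finite ∧ ¬ Φ.TotalOn C}

/-- Every oracle extending `g` on the columns below `M` makes `Φ` halt with a wrong answer. -/
def Refutes (g : ℕ → ℕ) (M : ℕ) : Prop :=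
  ∃ k σ n b, Φ.axs k = some (σ, n, b) ∧ SettledBelow σ g M ∧ n < M ∧ (g n).bodd = !b

variable {Φ}

theorem Refutes.cylinder_subset_modFinFailures {g : ℕ → ℕ} {M : ℕ} (h : Φ.Refutes g M) :
    cylinder g M ⊆ Φ.modFinFailures := by
  obtain ⟨k, σ, n, b, hk, hσ, hn, hb⟩ := h
  intro f hf hΦ
  have hout := hΦ.2 n b ⟨k, σ, hk, hσ.agreesSet hf⟩
  rw [oddSet, Set.mem_ofPred_eq, hf n hn, hb] at hout
  cases b <;> simp at hout

theorem exists_refutes_of_haltsT_diff {f : ℕ → ℕ} {L : ℕ} {b : Bool}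
    (hb : Φ.HaltsT (graphSet f \ {Nat.pair L (f L)}) L b) :
    ∃ j M, Φ.Refutes (Function.update f L j) M := by
  obtain ⟨k, σ, hk, hσ⟩ := hb
  set M := L + (σ.map Prod.fst).sum + 1
  have hM : ∀ p ∈ σ, p.1 < M := fun p hp =>
    Nat.lt_of_le_of_lt (List.le_sum_of_mem (List.mem_map_of_mem hp)) (by omega)
  refine ⟨Nat.bit (!b) M, M, k, σ, L, b, hk, fun p hp => ⟨?_, ?_⟩, by omega, by simp⟩
  · exact (Nat.unpair_left_le _).trans_lt (hM p hp)
  · rw [hσ p hp, mem_graphSet_update_iff]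
    calc p.1.unpair.2 ≤ p.1 := Nat.unpair_right_le _
      _ < M := hM p hp
      _ ≤ Nat.bit (!b) M := by rw [Nat.bit_val]; omega

theorem exists_cylinder_subset_modFinFailures (x : ℕ → ℕ) (L : ℕ) :
    ∃ g ∈ cylinder x L, ∃ M, cylinder g M ⊆ Φ.modFinFailures := by
  by_cases hK : ∃ g ∈ cylinder x L, ∃ M, Φ.Refutes g M
  · obtain ⟨g, hg, M, hM⟩ := hK
    exact ⟨g, hg, M, hM.cylinder_subset_modFinFailures⟩
  refine ⟨x, self_mem_cylinder x L, L, fun f hf _ =>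
    ⟨graphSet f \ {Nat.pair L (f L)}, ?_, fun htot => ?_⟩⟩
  · refine (Set.finite_singleton (Nat.pair L (f L))).subset fun n hn => ?_
    by_contra hne
    exact hn ⟨And.left, fun h => ⟨h, hne⟩⟩
  · obtain ⟨b, hb⟩ := htot L
    obtain ⟨j, M, hM⟩ := exists_refutes_of_haltsT_diff hb
    refine hK ⟨_, fun i hi => ?_, M, hM⟩
    rw [Function.update_of_ne hi.ne]
    exact hf i hi

end TuringFunctional

theorem TuringFunctional.dense_interior_modFinFailures (Φ : TuringFunctional) :
    Dense (interior Φ.modFinFailures) := by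
  refine (isTopologicalBasis_cylinders fun _ => ℕ).dense_iff.2 ?_
  rintro _ ⟨x, L, rfl⟩ -
  obtain ⟨g, hg, M, hM⟩ := exists_cylinder_subset_modFinFailures x L
  exact ⟨g, hg, mem_interior.2 ⟨_, hM, isOpen_cylinder _ g M, self_mem_cylinder g M⟩⟩

theorem exists_forall_mem_modFinFailures :
    ∃ f : ℕ → ℕ, ∀ Φ : TuringFunctional, f ∈ Φ.modFinFailures := by
  obtain ⟨f, hf⟩ := (dense_iInter_of_isOpen (fun _ => isOpen_interior)
    TuringFunctional.dense_interior_modFinFailures).nonempty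
  exact ⟨f, fun Φ => interior_subset (Set.mem_iInter.1 hf Φ)⟩

theorem not_modFinRed_of_forall_mem_modFinFailures {f : ℕ → ℕ}
    (hf : ∀ Φ : TuringFunctional, f ∈ Φ.modFinFailures) : ¬ ModFinRed (oddSet f) (graphSet f) := by
  rintro ⟨Φ, hΦ, hvariants⟩
  obtain ⟨C, hC, hpartial⟩ := hf Φ hΦ
  exact hpartial (hvariants C hC).1

theorem exists_ubfb_red_not_mod_finite_red :
    ∃ A B : Set ℕ, UbfbRed B A ∧ ¬ ModFinRed B A := by
  obtain ⟨f, hf⟩ := exists_forall_mem_modFinFailures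
  exact ⟨graphSet f, oddSet f, ubfbRed_oddSet_graphSet f,
    not_modFinRed_of_forall_mem_modFinFailures hf⟩
end
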